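/- arXiv:2105.01413 — 4 statements merged into one kernel-verified Lean document; each statement's English description precedes it below -/
import Mathlib

section
/- Let F be a rooted directed tree with root r, and let G be a digraph with at least two vertices that is an adjusted rooted directed path digraph over F; that is, for each v ∈ V(G) there are directed paths S_v and T_v in F whose endpoints farther from r coincide (S_v and T_v have the same last vertex), and (v, w) ∈ E(G) ⇔ V(S_v) ∩ V(T_w) ≠ ∅. Then bimimw(G) ≤ 2. -/
open scoped Classical

/-- An induced matching in a digraph with edge relation `D`: a finite set of edges of `D`,
no two of which share an endpoint, such that no edge of `D` joins an endpoint of one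
matching edge to an endpoint of a different matching edge. -/
def IsIndMatching {V : Type} (D : V → V → Prop) (M : Finset (V × V)) : Prop :=
  (∀ e ∈ M, D e.1 e.2) ∧
    ∀ e ∈ M, ∀ f ∈ M, e ≠ f →
      ∀ x, (x = e.1 ∨ x = e.2) → ∀ y, (y = f.1 ∨ y = f.2) → x ≠ y ∧ ¬D x y

/-- `ν(D)`: the maximum size of an induced matching in the digraph `D`. -/
noncomputable def nu {V : Type} (D : V → V → Prop) : ℕ :=
  sSup {n | ∃ M : Finset (V × V), IsIndMatching D M ∧ M.card = n}

/-- The bipartite digraph `G[A→B]`, whose edges are the edges of `E` from `A` to `B`. -/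
def cutRel {V : Type} (E : V → V → Prop) (A B : Set V) : V → V → Prop :=
  fun x y => x ∈ A ∧ y ∈ B ∧ E x y

/-- `bimim_G(A) = ν(G[A→Ā]) + ν(G[Ā→A])`. -/
noncomputable def bimimCut {V : Type} (E : V → V → Prop) (A : Set V) : ℕ :=
  nu (cutRel E A Aᶜ) + nu (cutRel E Aᶜ A)

/-- For an undirected graph `G`, `mim_G(A) = ν(G[A, Ā])`. -/
noncomputable def mimCut {V : Type} (G : SimpleGraph V) (A : Set V) : ℕ :=
  nu (cutRel G.Adj A Aᶜ)
/-- A caterpillar: a tree containing a path such that every vertex outside the path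
has a neighbor on the path. -/
def IsCaterpillar {L : Type} (T : SimpleGraph L) : Prop :=
  ∃ (u v : L) (p : T.Walk u v), p.IsPath ∧
    ∀ w : L, w ∉ p.support → ∃ x ∈ p.support, T.Adj w x

/-- A branch decomposition of a (di)graph on vertex set `V`: a subcubic tree (at least
two vertices, every internal vertex of degree 3) together with a bijection from `V`
to the set of leaves of the tree. -/
structure BranchDecomp (V : Type) where
  L : Type
  finL : Finite L
  T : SimpleGraph L
  isTree : T.IsTree
  two_le : 2 ≤ Nat.card L
  subcubic : ∀ t : L, (T.neighborSet t).ncard = 1 ∨ (T.neighborSet t).ncard = 3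
  toLeaf : V → L
  inj : Function.Injective toLeaf
  mem_leaf : ∀ v : V, (T.neighborSet (toLeaf v)).ncard = 1
  surj : ∀ t : L, (T.neighborSet t).ncard = 1 → ∃ v, toLeaf v = t

/-- The side `A_e` of the cut induced by the tree edge `{t₁, t₂}`: the set of vertices
mapped to leaves in the component of `T - e` containing `t₁`. -/
def BranchDecomp.side {V : Type} (bd : BranchDecomp V) (t₁ t₂ : bd.L) : Set V :=
  {v | (bd.T.deleteEdges {s(t₁, t₂)}).Reachable t₁ (bd.toLeaf v)}

/-- The bi-mim-width of a branch decomposition with respect to a digraph. -/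
noncomputable def BranchDecomp.width {V : Type} (bd : BranchDecomp V)
    (E : V → V → Prop) : ℕ :=
  sSup {n | ∃ t₁ t₂, bd.T.Adj t₁ t₂ ∧ n = bimimCut E (bd.side t₁ t₂)}

/-- The mim-width of a branch decomposition with respect to an undirected graph. -/
noncomputable def BranchDecomp.uwidth {V : Type} (bd : BranchDecomp V)
    (G : SimpleGraph V) : ℕ :=
  sSup {n | ∃ t₁ t₂, bd.T.Adj t₁ t₂ ∧ n = mimCut G (bd.side t₁ t₂)}

/-- The bi-mim-width of a digraph. -/
noncomputable def bimimw {V : Type} (E : V → V → Prop) : ℕ :=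
  sInf {n | ∃ bd : BranchDecomp V, bd.width E = n}

/-- The linear bi-mim-width of a digraph. -/
noncomputable def lbimimw {V : Type} (E : V → V → Prop) : ℕ :=
  sInf {n | ∃ bd : BranchDecomp V, IsCaterpillar bd.T ∧ bd.width E = n}

/-- The mim-width of an undirected graph. -/
noncomputable def mimw {V : Type} (G : SimpleGraph V) : ℕ :=
  sInf {n | ∃ bd : BranchDecomp V, bd.uwidth G = n}

/-- The linear mim-width of an undirected graph. -/
noncomputable def lmimw {V : Type} (G : SimpleGraph V) : ℕ :=
  sInf {n | ∃ bd : BranchDecomp V, IsCaterpillar bd.T ∧ bd.uwidth G = n}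


/-!
Write `ℓ v` for the common last vertex of `S v` and `T v`. Build a binary tree with leaf set `V`
by recursion down the rooted tree: at `u`, comb together the leaves `v` with `ℓ v = u` and the
trees built at the children of `u`. The leaf set `B` of each of its subtrees is a fan at some `u`:
some vertices `v` with `ℓ v = u`, together with all `v` with `ℓ v` below some children of `u`.

If `a ∈ B`, `b ∉ B` and `x ∈ S a ∩ T b` witnesses the edge `a → b`, then `x` is an ancestor of `u`
(otherwise `ℓ b` would lie below the same child of `u` as `x`) and `S a` contains the whole
segment from `x` to `u`. Of two such witnesses one is an ancestor of the other, so the lower one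
also lies on the other `S`-path: of two cut edges `a → b`, `a' → b'` one of `a → b'`, `a' → b` is
an edge too, which rules out induced matchings of size two. The same holds for edges into `B`.
Suppressing the root of the binary tree gives a branch decomposition whose cuts are these leaf
sets and their complements.
-/

open Relation

structure IsArborescence {W : Type} (A : W → W → Prop) (r : W) : Prop where
  parent_unique : ∀ {p q v}, A p v → A q v → p = q
  not_rel_root : ∀ p, ¬A p r
  reachable : ∀ w, ReflTransGen A r w

/-- In a tree on `n` vertices there are `n - 1` arcs, while every non-root vertex is the head of an
arc: so the head map is a bijection from the arcs onto the non-root vertices. -/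
theorem isArborescence_of_isTree {W : Type} [Fintype W] {A : W → W → Prop} {r : W}
    (hanti : ∀ u v, A u v → ¬A v u) (htree : (SimpleGraph.fromRel A).IsTree)
    (hroot : ∀ w, ReflTransGen A r w) : IsArborescence A r := by
  set arcs : Finset (W × W) := Finset.univ.filter fun e => A e.1 e.2
  have harcs : arcs.card ≤ Fintype.card W - 1 := by
    rw [← htree.card_edgeFinset]
    refine Finset.card_le_card_of_injOn (fun e => s(e.1, e.2)) (fun e he => ?_)
      (fun e he f hf hef => ?_)
    · have he : A e.1 e.2 := (Finset.mem_filter.1 he).2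
      simpa using ⟨fun h => hanti _ _ he (h ▸ he), Or.inl he⟩
    · have he : A e.1 e.2 := (Finset.mem_filter.1 he).2
      have hf : A f.1 f.2 := (Finset.mem_filter.1 hf).2
      rcases Sym2.mk_eq_mk_iff.1 hef with h | h
      · exact h
      · subst h
        exact absurd he (hanti _ _ hf)
  have hheads : Finset.univ.erase r ⊆ arcs.image Prod.snd := by
    intro v hv
    obtain ⟨p, -, hp⟩ := (hroot v).cases_tail.resolve_left (Finset.ne_of_mem_erase hv)
    exact Finset.mem_image.2 ⟨(p, v), by simpa [arcs] using hp, rfl⟩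
  have hcard : (Finset.univ.erase r).card = Fintype.card W - 1 := by
    rw [Finset.card_erase_of_mem (Finset.mem_univ r), Finset.card_univ]
  have himage := Finset.card_image_le (s := arcs) (f := Prod.snd)
  have heq : Finset.univ.erase r = arcs.image Prod.snd :=
    Finset.eq_of_subset_of_card_le hheads (by omega)
  have hinj := Finset.injOn_of_card_image_eq (by rw [← heq] at himage ⊢; omega)
  refine ⟨fun {p q v} hp hq => ?_, fun p hp => ?_, hroot⟩
  · have : (p, v) = (q, v) := hinj (by simpa [arcs] using hp) (by simpa [arcs] using hq) rfl
    exact congrArg Prod.fst this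
  · have : r ∈ arcs.image Prod.snd :=
      Finset.mem_image.2 ⟨(p, r), by simpa [arcs] using hp, rfl⟩
    simp [← heq] at this

theorem List.IsChain.reflTransGen_of_mem {α : Type} {R : α → α → Prop} {l : List α} {x z : α}
    (hl : l.IsChain R) (hz : l.getLast? = some z) (hx : x ∈ l) : ReflTransGen R x z :=
  hl.backwards_induction (ReflTransGen R · z) l (fun _ _ h h' => h'.head h)
    (fun _ => List.getLast_of_getLast?_eq_some hz ▸ .refl) x hx

namespace IsArborescence

variable {W : Type} {A : W → W → Prop} {r : W}

theorem eq_empty_of_forall_exists_rel_mem (hA : IsArborescence A r) {C : Set W}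
    (hC : ∀ w ∈ C, ∃ p ∈ C, A p w) : C = ∅ := by
  refine Set.eq_empty_of_forall_notMem fun w => ?_
  induction hA.reachable w with
  | refl =>
    intro hr
    obtain ⟨p, -, hp⟩ := hC r hr
    exact hA.not_rel_root p hp
  | tail _ hbc ih =>
    intro hc
    obtain ⟨p, hp, hpc⟩ := hC _ hc
    exact ih (hA.parent_unique hpc hbc ▸ hp)

theorem irrefl (hA : IsArborescence A r) (w : W) : ¬A w w := fun h =>
  (Set.singleton_nonempty w).ne_empty <|
    hA.eq_empty_of_forall_exists_rel_mem fun v hv => ⟨v, hv, (Set.mem_singleton_iff.1 hv) ▸ h⟩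

theorem antisymm (hA : IsArborescence A r) {u v : W} (huv : ReflTransGen A u v)
    (hvu : ReflTransGen A v u) : u = v := by
  by_contra hne
  have hC : ∀ w ∈ {w | ReflTransGen A u w ∧ ReflTransGen A w u},
      ∃ p ∈ {w | ReflTransGen A u w ∧ ReflTransGen A w u}, A p w := by
    rintro w ⟨huw, hwu⟩
    rcases huw.cases_tail with rfl | ⟨c, huc, hcw⟩
    · obtain ⟨q, hvq, hqw⟩ := hvu.cases_tail.resolve_left hne
      exact ⟨q, ⟨huv.trans hvq, .single hqw⟩, hqw⟩
    · exact ⟨c, ⟨huc, hwu.head hcw⟩, hcw⟩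
  exact (hA.eq_empty_of_forall_exists_rel_mem hC).subset ⟨.refl, .refl⟩

theorem not_reflTransGen_of_rel (hA : IsArborescence A r) {u c : W} (h : A u c) :
    ¬ReflTransGen A c u := fun hcu => hA.irrefl u (hA.antisymm (.single h) hcu ▸ h)

theorem reflTransGen_or_reflTransGen (hA : IsArborescence A r) {u v w : W}
    (huw : ReflTransGen A u w) (hvw : ReflTransGen A v w) :
    ReflTransGen A u v ∨ ReflTransGen A v u := by
  induction huw generalizing v with
  | refl => exact .inr hvw
  | tail huq hqw ih =>
    rcases hvw.cases_tail with rfl | ⟨z, hvz, hzw⟩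
    · exact .inl (huq.tail hqw)
    · exact ih (hA.parent_unique hzw hqw ▸ hvz)

theorem child_unique (hA : IsArborescence A r) {u c d w : W} (hc : A u c) (hd : A u d)
    (hcw : ReflTransGen A c w) (hdw : ReflTransGen A d w) : c = d := by
  have key : ∀ {c d}, A u c → A u d → ReflTransGen A c d → c = d := by
    intro c d hc hd hcd
    rcases hcd.cases_tail with rfl | ⟨z, hcz, hzd⟩
    · rfl
    · exact absurd (hA.parent_unique hzd hd ▸ hcz) (hA.not_reflTransGen_of_rel hc)
  rcases hA.reflTransGen_or_reflTransGen hcw hdw with h | h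
  · exact key hc hd h
  · exact (key hd hc h).symm

theorem mem_of_isChain (hA : IsArborescence A r) {l : List W} {x y z : W} (hl : l.IsChain A)
    (hz : l.getLast? = some z) (hx : x ∈ l) (hxy : ReflTransGen A x y)
    (hyz : ReflTransGen A y z) : y ∈ l := by
  induction l generalizing x with
  | nil => simp at hx
  | cons a l ih =>
    rcases l with _ | ⟨b, l⟩
    · obtain rfl : a = z := by simpa using hz
      obtain rfl : x = a := by simpa using hx
      simp [hA.antisymm hyz hxy]
    · have hab : A a b := (List.isChain_cons_cons.1 hl).1
      have hl' := (List.isChain_cons_cons.1 hl).2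
      have hz' : (b :: l).getLast? = some z := by simpa [List.getLast?_cons_cons] using hz
      rcases List.mem_cons.1 hx with rfl | hx'
      · rcases hxy.cases_head with rfl | ⟨c, hxc, hcy⟩
        · exact List.mem_cons_self
        · have hcb : c = b := hA.child_unique hxc hab (hcy.trans hyz)
            (hl'.reflTransGen_of_mem hz' List.mem_cons_self)
          exact List.mem_cons_of_mem _ (ih hl' hz' List.mem_cons_self (hcb ▸ hcy))
      · exact List.mem_cons_of_mem _ (ih hl' hz' hx' hxy)

end IsArborescence

theorem nu_le_one_of_cross {V : Type} {D : V → V → Prop}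
    (h : ∀ a b a' b', D a b → D a' b' → D a b' ∨ D a' b) : nu D ≤ 1 := by
  refine csSup_le ⟨0, ∅, ⟨by simp, by simp⟩, rfl⟩ ?_
  rintro n ⟨M, ⟨hMD, hMind⟩, rfl⟩
  by_contra! hn
  obtain ⟨e, he, f, hf, hef⟩ := Finset.one_lt_card.1 hn
  rcases h _ _ _ _ (hMD e he) (hMD f hf) with hd | hd
  · exact (hMind e he f hf hef _ (.inl rfl) _ (.inr rfl)).2 hd
  · exact (hMind f hf e he (Ne.symm hef) _ (.inl rfl) _ (.inr rfl)).2 hd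

theorem bimimCut_compl {V : Type} (E : V → V → Prop) (B : Set V) :
    bimimCut E Bᶜ = bimimCut E B := by
  rw [bimimCut, bimimCut, compl_compl, add_comm]

section Fan

variable {W V : Type} {A : W → W → Prop} {r : W} {ℓ : V → W}

def IsFanAt (A : W → W → Prop) (ℓ : V → W) (u : W) (B : Set V) : Prop :=
  ∃ (X : Set V) (J : Set W), (∀ v ∈ X, ℓ v = u) ∧ (∀ c ∈ J, A u c) ∧
    B = X ∪ {v | ∃ c ∈ J, ReflTransGen A c (ℓ v)}

theorem isFanAt_singleton (w : V) : IsFanAt A ℓ (ℓ w) {w} :=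
  ⟨{w}, ∅, fun v hv => by rw [Set.mem_singleton_iff.1 hv], by simp, by simp⟩

theorem IsArborescence.segment_subset_of_isFanAt (hA : IsArborescence A r) {u : W} {B : Set V}
    (hB : IsFanAt A ℓ u B) {a b : V} (ha : a ∈ B) (hb : b ∉ B) {l : List W} (hl : l.IsChain A)
    (hla : l.getLast? = some (ℓ a)) {x : W} (hx : x ∈ l) (hxb : ReflTransGen A x (ℓ b)) :
    ReflTransGen A x u ∧ ∀ y, ReflTransGen A x y → ReflTransGen A y u → y ∈ l := by
  obtain ⟨X, J, hX, hJ, rfl⟩ := hB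
  have hxa : ReflTransGen A x (ℓ a) := hl.reflTransGen_of_mem hla hx
  have hua : ReflTransGen A u (ℓ a) ∧ ReflTransGen A x u := by
    rcases ha with haX | ⟨c, hcJ, hca⟩
    · exact ⟨hX a haX ▸ .refl, hX a haX ▸ hxa⟩
    · refine ⟨hca.head (hJ c hcJ), ?_⟩
      rcases hA.reflTransGen_or_reflTransGen hxa (hca.head (hJ c hcJ)) with hxu | hux
      · exact hxu
      rcases hux.cases_head with rfl | ⟨d, hud, hdx⟩
      · exact .refl
      · have hdc := hA.child_unique hud (hJ c hcJ) (hdx.trans hxa) hca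
        exact absurd (.inr ⟨c, hcJ, hdc ▸ hdx.trans hxb⟩) hb
  exact ⟨hua.2, fun y hxy hyu => hA.mem_of_isChain hl hla hx hxy (hyu.trans hua.1)⟩

theorem IsArborescence.cross_of_isFanAt (hA : IsArborescence A r) {u : W} {B : Set V}
    (hB : IsFanAt A ℓ u B) {P Q : V → List W}
    (hP : ∀ v, (P v).IsChain A ∧ (P v).getLast? = some (ℓ v))
    (hQ : ∀ v, (Q v).IsChain A ∧ (Q v).getLast? = some (ℓ v))
    {a a' b b' : V} (ha : a ∈ B) (ha' : a' ∈ B) (hb : b ∉ B) (hb' : b' ∉ B)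
    (hab : ∃ x, x ∈ P a ∧ x ∈ Q b) (hab' : ∃ y, y ∈ P a' ∧ y ∈ Q b') :
    (∃ x, x ∈ P a ∧ x ∈ Q b') ∨ (∃ x, x ∈ P a' ∧ x ∈ Q b) := by
  obtain ⟨x, hxa, hxb⟩ := hab
  obtain ⟨y, hya, hyb⟩ := hab'
  obtain ⟨hxu, hsega⟩ := hA.segment_subset_of_isFanAt hB ha hb (hP a).1 (hP a).2 hxa
    ((hQ b).1.reflTransGen_of_mem (hQ b).2 hxb)
  obtain ⟨hyu, hsega'⟩ := hA.segment_subset_of_isFanAt hB ha' hb' (hP a').1 (hP a').2 hya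
    ((hQ b').1.reflTransGen_of_mem (hQ b').2 hyb)
  rcases hA.reflTransGen_or_reflTransGen hxu hyu with hxy | hyx
  · exact .inl ⟨y, hsega y hxy hyu, hyb⟩
  · exact .inr ⟨x, hsega' x hyx hxu, hxb⟩

theorem IsArborescence.bimimCut_le_two_of_isFanAt (hA : IsArborescence A r) {E : V → V → Prop}
    {S T : V → List W} (hS : ∀ v, (S v).IsChain A ∧ (S v).getLast? = some (ℓ v))
    (hT : ∀ v, (T v).IsChain A ∧ (T v).getLast? = some (ℓ v))
    (hE : ∀ v w, E v w ↔ ∃ x, x ∈ S v ∧ x ∈ T w) {u : W} {B : Set V} (hB : IsFanAt A ℓ u B) :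
    bimimCut E B ≤ 2 := by
  have hout : nu (cutRel E B Bᶜ) ≤ 1 := by
    refine nu_le_one_of_cross ?_
    rintro a b a' b' ⟨ha, hb, hab⟩ ⟨ha', hb', hab'⟩
    rcases hA.cross_of_isFanAt hB hS hT ha ha' hb hb' ((hE _ _).1 hab) ((hE _ _).1 hab')
      with h | h
    · exact .inl ⟨ha, hb', (hE _ _).2 h⟩
    · exact .inr ⟨ha', hb, (hE _ _).2 h⟩
  have hin : nu (cutRel E Bᶜ B) ≤ 1 := by
    refine nu_le_one_of_cross ?_
    rintro b a b' a' ⟨hb, ha, hba⟩ ⟨hb', ha', hba'⟩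
    have hE' : ∀ v w, E v w ↔ ∃ x, x ∈ T w ∧ x ∈ S v := fun v w =>
      (hE v w).trans (exists_congr fun _ => and_comm)
    rcases hA.cross_of_isFanAt hB hT hS ha ha' hb hb' ((hE' _ _).1 hba) ((hE' _ _).1 hba')
      with h | h
    · exact .inr ⟨hb', ha, (hE' _ _).2 h⟩
    · exact .inl ⟨hb, ha', (hE' _ _).2 h⟩
  exact Nat.add_le_add hout hin

end Fan

inductive BinTree (V : Type) : Type
  | leaf (v : V)
  | node (l r : BinTree V)

namespace BinTree

variable {V : Type}

def leaves : BinTree V → List V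
  | leaf v => [v]
  | node l r => l.leaves ++ r.leaves

def subtree? : BinTree V → List Bool → Option (BinTree V)
  | t, [] => some t
  | leaf _, _ :: _ => none
  | node l r, b :: p => (if b then r else l).subtree? p

def depth : BinTree V → ℕ
  | leaf _ => 0
  | node l r => max l.depth r.depth + 1

@[simp]
theorem subtree?_nil (t : BinTree V) : t.subtree? [] = some t := by
  cases t <;> rfl

@[simp]
theorem subtree?_leaf_cons (v : V) (b : Bool) (p : List Bool) :
    (leaf v).subtree? (b :: p) = none := rfl

@[simp]
theorem subtree?_node_cons (l r : BinTree V) (b : Bool) (p : List Bool) :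
    (node l r).subtree? (b :: p) = (if b then r else l).subtree? p := rfl

theorem subtree?_append (t : BinTree V) (p q : List Bool) :
    t.subtree? (p ++ q) = (t.subtree? p).bind (·.subtree? q) := by
  induction p generalizing t with
  | nil => simp
  | cons b p ih => cases t <;> simp [ih]

theorem isSome_subtree?_of_append {t : BinTree V} {p q : List Bool}
    (h : (t.subtree? (p ++ q)).isSome) : (t.subtree? p).isSome := by
  rw [subtree?_append] at h
  cases hp : t.subtree? p <;> simp_all

theorem length_le_depth {t s : BinTree V} {p : List Bool} (h : t.subtree? p = some s) :
    p.length ≤ t.depth := by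
  induction t generalizing p with
  | leaf v => cases p <;> simp_all [depth]
  | node l r ihl ihr =>
    rcases p with _ | ⟨_ | _, p⟩
    · simp
    · have := ihl (by simpa using h); simp [depth]; omega
    · have := ihr (by simpa using h); simp [depth]; omega

theorem leaves_subset_of_subtree? {t s : BinTree V} {p : List Bool} (h : t.subtree? p = some s) :
    s.leaves ⊆ t.leaves := by
  induction t generalizing p with
  | leaf v => cases p <;> simp_all
  | node l r ihl ihr =>
    rcases p with _ | ⟨_ | _, p⟩
    · simp_all
    · exact fun _ hx => List.mem_append_left _ (ihl (by simpa using h) hx)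
    · exact fun _ hx => List.mem_append_right _ (ihr (by simpa using h) hx)

theorem exists_subtree?_eq_leaf {t : BinTree V} {v : V} (hv : v ∈ t.leaves) :
    ∃ p, t.subtree? p = some (leaf v) := by
  induction t with
  | leaf w => exact ⟨[], by simp_all [leaves]⟩
  | node l r ihl ihr =>
    rcases List.mem_append.1 hv with h | h
    · obtain ⟨p, hp⟩ := ihl h
      exact ⟨false :: p, by simpa using hp⟩
    · obtain ⟨p, hp⟩ := ihr h
      exact ⟨true :: p, by simpa using hp⟩

theorem eq_of_subtree?_eq_leaf {t : BinTree V} (hnd : t.leaves.Nodup) {p q : List Bool} {v : V}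
    (hp : t.subtree? p = some (leaf v)) (hq : t.subtree? q = some (leaf v)) : p = q := by
  induction t generalizing p q with
  | leaf w => cases p <;> cases q <;> simp_all
  | node l r ihl ihr =>
    have hlr := List.nodup_append.1 hnd
    have hdisj (hl : v ∈ l.leaves) (hr : v ∈ r.leaves) : False := hlr.2.2 v hl v hr rfl
    rcases p with _ | ⟨_ | _, p⟩ <;> rcases q with _ | ⟨_ | _, q⟩ <;> simp at hp hq
    · rw [ihl hlr.1 hp hq]
    · exact (hdisj (leaves_subset_of_subtree? hp (by simp [leaves]))
        (leaves_subset_of_subtree? hq (by simp [leaves]))).elim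
    · exact (hdisj (leaves_subset_of_subtree? hq (by simp [leaves]))
        (leaves_subset_of_subtree? hp (by simp [leaves]))).elim
    · rw [ihr hlr.2.1 hp hq]

theorem mem_leaves_iff_prefix {t s : BinTree V} (hnd : t.leaves.Nodup) {p q : List Bool} {v : V}
    (hs : t.subtree? p = some s) (hq : t.subtree? q = some (leaf v)) :
    v ∈ s.leaves ↔ p <+: q := by
  constructor
  · intro hv
    obtain ⟨p', hp'⟩ := exists_subtree?_eq_leaf hv
    have : t.subtree? (p ++ p') = some (leaf v) := by rw [subtree?_append, hs]; exact hp'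
    exact ⟨p', eq_of_subtree?_eq_leaf hnd this hq⟩
  · rintro ⟨p', rfl⟩
    rw [subtree?_append, hs] at hq
    exact leaves_subset_of_subtree? hq (by simp [leaves])

/-- The right comb `node t₁ (node t₂ (⋯ tₙ))`; the empty list gives the junk value `leaf d`. -/
def comb (d : V) : List (BinTree V) → BinTree V
  | [] => leaf d
  | [t] => t
  | t :: t' :: l => node t (comb d (t' :: l))

theorem leaves_comb (d : V) {l : List (BinTree V)} (hl : l ≠ []) :
    (comb d l).leaves = l.flatMap leaves := by
  induction l with
  | nil => exact absurd rfl hl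
  | cons t l ih =>
    rcases l with _ | ⟨t', l⟩
    · simp [comb]
    · simp [comb, leaves, ih]

theorem subtree?_comb (d : V) {l : List (BinTree V)} (hl : l ≠ []) {p : List Bool}
    {s : BinTree V} (h : (comb d l).subtree? p = some s) :
    (∃ l', l' ≠ [] ∧ l' ⊆ l ∧ s = comb d l') ∨ ∃ t ∈ l, ∃ q, t.subtree? q = some s := by
  induction l generalizing p with
  | nil => exact absurd rfl hl
  | cons t l ih =>
    rcases l with _ | ⟨t', l⟩
    · exact .inr ⟨t, List.mem_singleton_self t, p, h⟩
    rcases p with _ | ⟨_ | _, p⟩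
    · exact .inl ⟨_, hl, List.Subset.refl _, (Option.some_inj.1 h).symm⟩
    · exact .inr ⟨t, List.mem_cons_self, p, h⟩
    · rcases ih (List.cons_ne_nil _ _) h with ⟨l', hl', hsub, rfl⟩ | ⟨u, hu, q, hq⟩
      · exact .inl ⟨l', hl', List.Subset.trans hsub (List.subset_cons_self _ _), rfl⟩
      · exact .inr ⟨u, List.mem_cons_of_mem _ hu, q, hq⟩

end BinTree

theorem SimpleGraph.exists_reachable_of_descent {α : Type} {G : SimpleGraph α} (f : α → ℕ)
    {P Q : α → Prop} (step : ∀ z, P z → ¬Q z → ∃ z', G.Adj z z' ∧ P z' ∧ f z' < f z)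
    (z : α) (hz : P z) : ∃ w, Q w ∧ G.Reachable z w := by
  induction hf : f z using Nat.strong_induction_on generalizing z with
  | _ n ih =>
    by_cases hQ : Q z
    · exact ⟨z, hQ, .refl z⟩
    obtain ⟨z', hadj, hz', hlt⟩ := step z hz hQ
    obtain ⟨w, hw, hreach⟩ := ih _ (hf ▸ hlt) z' hz' rfl
    exact ⟨w, hw, hadj.reachable.trans hreach⟩

theorem List.IsPrefix.prefix_dropLast {α : Type} {l₁ l₂ : List α} (h : l₁ <+: l₂) (hne : l₁ ≠ l₂) :
    l₁ <+: l₂.dropLast := by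
  obtain ⟨t, rfl⟩ := h
  have ht : t ≠ [] := by rintro rfl; simp at hne
  rw [List.dropLast_append_of_ne_nil ht]
  exact List.prefix_append _ _

namespace BinTree

section Decomposition

variable {V : Type} {t₁ t₂ : BinTree V}

variable (t₁ t₂) in
def Pos : Type := {p : List Bool // p ≠ [] ∧ ((node t₁ t₂).subtree? p).isSome}

instance : Finite (Pos t₁ t₂) := by
  have : Finite {l : List Bool // l.length ≤ (node t₁ t₂).depth} :=
    (List.finite_length_le Bool _).to_subtype
  refine Finite.of_injective (β := {l : List Bool // l.length ≤ (node t₁ t₂).depth})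
    (fun x => ⟨x.1, ?_⟩) fun x y h => Subtype.ext (by simpa using h)
  obtain ⟨s, hs⟩ := Option.isSome_iff_exists.1 x.2.2
  exact length_le_depth hs

variable (t₁ t₂) in
/-- The positions of `node t₁ t₂` as a graph, with the root suppressed: its two children are
joined by an edge, so that every position has degree one or three. -/
def decompGraph : SimpleGraph (Pos t₁ t₂) where
  Adj x y := (∃ b, y.1 = x.1 ++ [b]) ∨ (∃ b, x.1 = y.1 ++ [b]) ∨
    (x.1 = [false] ∧ y.1 = [true]) ∨ (x.1 = [true] ∧ y.1 = [false])
  symm := ⟨fun x y h => by tauto⟩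
  loopless := ⟨fun x h => by
    rcases h with ⟨b, h⟩ | ⟨b, h⟩ | ⟨h₁, h₂⟩ | ⟨h₁, h₂⟩
    · simpa using congrArg List.length h
    · simpa using congrArg List.length h
    · simp [h₁] at h₂
    · simp [h₁] at h₂⟩

namespace Pos

def left : Pos t₁ t₂ := ⟨[false], by simp, by simp⟩

def right : Pos t₁ t₂ := ⟨[true], by simp, by simp⟩

theorem length_pos (x : Pos t₁ t₂) : 0 < x.1.length := List.length_pos_iff.2 x.2.1

theorem eq_left_or_right (x : Pos t₁ t₂) (h : x.1.length = 1) : x = left ∨ x = right := by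
  obtain ⟨b, hb⟩ := List.length_eq_one_iff.1 h
  cases b
  · exact .inl (Subtype.ext hb)
  · exact .inr (Subtype.ext hb)

/-- The two children of the root count as each other's parent. -/
def up (x : Pos t₁ t₂) : Pos t₁ t₂ :=
  if h : 2 ≤ x.1.length then
    ⟨x.1.dropLast, by
      refine ⟨fun hh => by simpa [hh] using (by simp; omega : x.1.dropLast.length ≠ 0), ?_⟩
      exact isSome_subtree?_of_append ((List.dropLast_append_getLast x.2.1).symm ▸ x.2.2)⟩
  else if x.1 = [false] then right else left

theorem up_val {x : Pos t₁ t₂} (h : 2 ≤ x.1.length) : (up x).1 = x.1.dropLast := by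
  simp [up, h]

end Pos

open Pos

theorem adj_left_right : (decompGraph t₁ t₂).Adj left right := .inr (.inr (.inl ⟨rfl, rfl⟩))

theorem adj_up (x : Pos t₁ t₂) : (decompGraph t₁ t₂).Adj x (up x) := by
  by_cases h : 2 ≤ x.1.length
  · exact .inr (.inl ⟨x.1.getLast x.2.1, by rw [up_val h, List.dropLast_append_getLast]⟩)
  · rcases eq_left_or_right x (by have := x.length_pos; omega) with rfl | rfl
    · exact adj_left_right
    · exact adj_left_right.symm

theorem eq_up_of_adj {x u : Pos t₁ t₂} (hadj : (decompGraph t₁ t₂).Adj x u)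
    (hu : ¬x.1 <+: u.1) : u = up x := by
  rcases hadj with ⟨b, h⟩ | ⟨b, h⟩ | ⟨h₁, h₂⟩ | ⟨h₁, h₂⟩
  · exact absurd (h ▸ List.prefix_append _ _) hu
  · have hx : 2 ≤ x.1.length := by have := u.length_pos; simp [h]; omega
    exact Subtype.ext (by rw [up_val hx, h, List.dropLast_concat])
  · exact Subtype.ext (by simp [up, h₁, h₂, right])
  · exact Subtype.ext (by simp [up, h₁, h₂, left])

theorem eq_of_adj_of_prefix {x z u : Pos t₁ t₂} (hadj : (decompGraph t₁ t₂).Adj z u)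
    (hz : x.1 <+: z.1) (hu : ¬x.1 <+: u.1) : z = x := by
  have single {c : Bool} (h : z.1 = [c]) : z = x := by
    have hxc : x.1 <+: [c] := h ▸ hz
    have := hxc.length_le
    have := x.length_pos
    exact Subtype.ext (h.trans (hxc.eq_of_length (by simp at *; omega)).symm)
  rcases hadj with ⟨b, h⟩ | ⟨b, h⟩ | ⟨h₁, -⟩ | ⟨h₁, -⟩
  · exact absurd (hz.trans (h ▸ List.prefix_append _ _)) hu
  · rcases List.prefix_concat_iff.1 (h ▸ hz) with h' | h'
    · exact Subtype.ext (h.trans h'.symm)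
    · exact absurd h' hu
  · exact single h₁
  · exact single h₁

variable {x y : Pos t₁ t₂}

theorem not_prefix_of_adj_of_prefix (hadj : (decompGraph t₁ t₂).Adj x y) (h : x.1 <+: y.1) :
    ¬y.1 <+: x.1 := fun h' =>
  hadj.ne (Subtype.ext (h.eq_of_length (le_antisymm h.length_le h'.length_le)))

-- For adjacent `x` and `y`, the hypothesis `¬x.1 <+: y.1` says that `y = up x`.

theorem prefix_iff_of_reachable_deleteEdges (hadj : (decompGraph t₁ t₂).Adj x y)
    (hxy : ¬x.1 <+: y.1) {z w : Pos t₁ t₂}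
    (h : ((decompGraph t₁ t₂).deleteEdges {s(x, y)}).Reachable z w) :
    x.1 <+: z.1 ↔ x.1 <+: w.1 := by
  have step : ∀ z w, ((decompGraph t₁ t₂).deleteEdges {s(x, y)}).Adj z w →
      x.1 <+: z.1 → x.1 <+: w.1 := by
    intro z w hzw hz
    by_contra hw
    rw [SimpleGraph.deleteEdges_adj] at hzw
    have hzx := eq_of_adj_of_prefix hzw.1 hz hw
    have hwy : w = y := (eq_up_of_adj (hzx ▸ hzw.1) hw).trans (eq_up_of_adj hadj hxy).symm
    exact hzw.2 (by rw [hzx, hwy]; rfl)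
  rw [SimpleGraph.reachable_iff_reflTransGen] at h
  induction h with
  | refl => rfl
  | tail _ hadj' ih => exact ih.trans ⟨step _ _ hadj', step _ _ hadj'.symm⟩

theorem reachable_deleteEdges_of_prefix (hxy : ¬x.1 <+: y.1) {z : Pos t₁ t₂} (hz : x.1 <+: z.1) :
    ((decompGraph t₁ t₂).deleteEdges {s(x, y)}).Reachable z x := by
  have step : ∀ z : Pos t₁ t₂, x.1 <+: z.1 → z ≠ x → ∃ z',
      ((decompGraph t₁ t₂).deleteEdges {s(x, y)}).Adj z z' ∧ x.1 <+: z'.1 ∧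
        z'.1.length < z.1.length := by
    intro z hz hzx
    have hlt : x.1.length < z.1.length :=
      lt_of_le_of_ne hz.length_le fun h => hzx (Subtype.ext (hz.eq_of_length h)).symm
    have hz2 : 2 ≤ z.1.length := by have := x.length_pos; omega
    refine ⟨up z, (SimpleGraph.deleteEdges_adj ..).2 ⟨adj_up z, ?_⟩, ?_, ?_⟩
    · simp only [Set.mem_singleton_iff, Sym2.eq_iff, not_or, not_and]
      exact ⟨fun h => absurd h hzx, fun h => absurd (h ▸ hz) hxy⟩
    · rw [up_val hz2]
      exact hz.prefix_dropLast fun h => hlt.ne (congrArg List.length h)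
    · simp [up_val hz2]; omega
  obtain ⟨w, rfl, h⟩ := SimpleGraph.exists_reachable_of_descent _ step z hz
  exact h

theorem reachable_deleteEdges_left_of_not_prefix (hx : 2 ≤ x.1.length) {z : Pos t₁ t₂}
    (hz : ¬x.1 <+: z.1) : ((decompGraph t₁ t₂).deleteEdges {s(x, y)}).Reachable z left := by
  have step : ∀ z : Pos t₁ t₂, ¬x.1 <+: z.1 → z.1.length ≠ 1 → ∃ z',
      ((decompGraph t₁ t₂).deleteEdges {s(x, y)}).Adj z z' ∧ ¬x.1 <+: z'.1 ∧
        z'.1.length < z.1.length := by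
    intro z hz hz1
    have hz2 : 2 ≤ z.1.length := by have := z.length_pos; omega
    have hup : (up z).1 <+: z.1 := up_val hz2 ▸ List.dropLast_prefix _
    refine ⟨up z, (SimpleGraph.deleteEdges_adj ..).2 ⟨adj_up z, ?_⟩, fun h => hz (h.trans hup),
      ?_⟩
    · simp only [Set.mem_singleton_iff, Sym2.eq_iff, not_or, not_and]
      exact ⟨fun h => absurd (h ▸ List.prefix_refl _) hz, fun _ h => hz (h ▸ hup)⟩
    · simp [up_val hz2]; omega
  obtain ⟨w, hw, h⟩ := SimpleGraph.exists_reachable_of_descent _ step z hz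
  rcases eq_left_or_right w hw with rfl | rfl
  · exact h
  · refine h.trans ((SimpleGraph.deleteEdges_adj ..).2 ⟨adj_left_right.symm, ?_⟩).reachable
    simp only [Set.mem_singleton_iff, Sym2.eq_iff, not_or, not_and]
    exact ⟨fun h => by simp [← h, right] at hx, fun _ h => by simp [← h, left] at hx⟩

theorem not_prefix_left_right : ¬(left : Pos t₁ t₂).1 <+: (right : Pos t₁ t₂).1 := by
  simp [left, right]

theorem not_prefix_right_left : ¬(right : Pos t₁ t₂).1 <+: (left : Pos t₁ t₂).1 := by
  simp [left, right]

theorem decompGraph_connected : (decompGraph t₁ t₂).Connected := by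
  have hleft (z : Pos t₁ t₂) : (decompGraph t₁ t₂).Reachable z left := by
    obtain ⟨b, p, hz⟩ := List.exists_cons_of_ne_nil z.2.1
    have hbz : [b] <+: z.1 := hz ▸ ⟨p, rfl⟩
    cases b
    · exact (reachable_deleteEdges_of_prefix not_prefix_left_right hbz).mono
        (SimpleGraph.deleteEdges_le _)
    · exact ((reachable_deleteEdges_of_prefix not_prefix_right_left hbz).mono
        (SimpleGraph.deleteEdges_le _)).trans adj_left_right.symm.reachable
  exact (SimpleGraph.connected_iff _).2 ⟨fun z w => (hleft z).trans (hleft w).symm, ⟨left⟩⟩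

theorem decompGraph_isAcyclic : (decompGraph t₁ t₂).IsAcyclic := by
  refine SimpleGraph.isAcyclic_iff_forall_adj_isBridge.2 fun x u hadj => ?_
  intro hreach
  by_cases hxu : x.1 <+: u.1
  · have hux := not_prefix_of_adj_of_prefix hadj hxu
    rw [Sym2.eq_swap] at hreach
    exact hux ((prefix_iff_of_reachable_deleteEdges hadj.symm hux hreach.symm).1
      (List.prefix_refl _))
  · exact hxu ((prefix_iff_of_reachable_deleteEdges hadj hxu hreach).1 (List.prefix_refl _))

theorem eq_append_of_adj_of_prefix (hadj : (decompGraph t₁ t₂).Adj x y) (hxy : x.1 <+: y.1) :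
    ∃ b, y.1 = x.1 ++ [b] := by
  rcases hadj with h | ⟨b, h⟩ | ⟨h₁, h₂⟩ | ⟨h₁, h₂⟩
  · exact h
  · simpa [h] using hxy.length_le
  · simp [h₁, h₂] at hxy
  · simp [h₁, h₂] at hxy

def Pos.child (x : Pos t₁ t₂) {s₁ s₂ : BinTree V}
    (h : (node t₁ t₂).subtree? x.1 = some (node s₁ s₂)) (b : Bool) : Pos t₁ t₂ :=
  ⟨x.1 ++ [b], by simp, by rw [subtree?_append, h]; cases b <;> simp⟩

theorem neighborSet_of_subtree?_eq_leaf {v : V}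
    (h : (node t₁ t₂).subtree? x.1 = some (leaf v)) :
    (decompGraph t₁ t₂).neighborSet x = {up x} := by
  ext u
  refine ⟨fun hadj => eq_up_of_adj hadj fun hxu => ?_, fun hu => hu ▸ adj_up x⟩
  obtain ⟨b, hb⟩ := eq_append_of_adj_of_prefix hadj hxu
  simpa [hb, subtree?_append, h] using u.2.2

theorem neighborSet_of_subtree?_eq_node {s₁ s₂ : BinTree V}
    (h : (node t₁ t₂).subtree? x.1 = some (node s₁ s₂)) :
    (decompGraph t₁ t₂).neighborSet x = {up x, x.child h false, x.child h true} := by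
  ext u
  simp only [SimpleGraph.mem_neighborSet, Set.mem_insert_iff, Set.mem_singleton_iff]
  constructor
  · intro hadj
    by_cases hxu : x.1 <+: u.1
    · obtain ⟨_ | _, hb⟩ := eq_append_of_adj_of_prefix hadj hxu
      · exact .inr (.inl (Subtype.ext hb))
      · exact .inr (.inr (Subtype.ext hb))
    · exact .inl (eq_up_of_adj hadj hxu)
  · rintro (rfl | rfl | rfl)
    · exact adj_up x
    · exact .inl ⟨false, rfl⟩
    · exact .inl ⟨true, rfl⟩

theorem ncard_neighborSet_of_subtree?_eq_node {s₁ s₂ : BinTree V}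
    (h : (node t₁ t₂).subtree? x.1 = some (node s₁ s₂)) :
    ((decompGraph t₁ t₂).neighborSet x).ncard = 3 := by
  rw [neighborSet_of_subtree?_eq_node h]
  have hup : (up x).1.length ≤ x.1.length := by
    by_cases h2 : 2 ≤ x.1.length
    · simp [up_val h2]
    · rcases eq_left_or_right x (by have := x.length_pos; omega) with rfl | rfl <;>
        simp [up, left, right]
  have hchild (b : Bool) : up x ≠ x.child h b := fun hb => by
    have := congrArg (·.1.length) hb
    simp [Pos.child] at this
    omega
  refine Set.ncard_eq_three.2 ⟨_, _, _, hchild false, hchild true, fun hb => ?_, rfl⟩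
  simpa [Pos.child] using congrArg Subtype.val hb

noncomputable def leafPos (hall : ∀ v, v ∈ (node t₁ t₂).leaves) (v : V) : Pos t₁ t₂ :=
  ⟨(exists_subtree?_eq_leaf (hall v)).choose,
    fun h => by simpa [h] using (exists_subtree?_eq_leaf (hall v)).choose_spec,
    by rw [(exists_subtree?_eq_leaf (hall v)).choose_spec]; rfl⟩

theorem subtree?_leafPos (hall : ∀ v, v ∈ (node t₁ t₂).leaves) (v : V) :
    (node t₁ t₂).subtree? (leafPos hall v).1 = some (leaf v) :=
  (exists_subtree?_eq_leaf (hall v)).choose_spec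

variable (t₁ t₂) in
noncomputable def toBranchDecomp (hall : ∀ v, v ∈ (node t₁ t₂).leaves)
    (hnd : (node t₁ t₂).leaves.Nodup) : BranchDecomp V where
  L := Pos t₁ t₂
  finL := inferInstance
  T := decompGraph t₁ t₂
  isTree := ⟨decompGraph_connected, decompGraph_isAcyclic⟩
  two_le := Finite.one_lt_card_iff_nontrivial.2 ⟨left, right, fun h => by
    simpa [left, right] using congrArg Subtype.val h⟩
  subcubic x := by
    obtain ⟨_ | _, hs⟩ := Option.isSome_iff_exists.1 x.2.2
    · exact .inl (by rw [neighborSet_of_subtree?_eq_leaf hs, Set.ncard_singleton])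
    · exact .inr (ncard_neighborSet_of_subtree?_eq_node hs)
  toLeaf := leafPos hall
  inj v w h := by simpa [h, subtree?_leafPos] using (subtree?_leafPos hall v).symm
  mem_leaf v := by
    rw [neighborSet_of_subtree?_eq_leaf (subtree?_leafPos hall v), Set.ncard_singleton]
  surj x hx := by
    obtain ⟨_ | _, hs⟩ := Option.isSome_iff_exists.1 x.2.2
    · exact ⟨_, Subtype.ext (eq_of_subtree?_eq_leaf hnd (subtree?_leafPos hall _) hs)⟩
    · simp [ncard_neighborSet_of_subtree?_eq_node hs] at hx

theorem side_toBranchDecomp {hall : ∀ v, v ∈ (node t₁ t₂).leaves}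
    {hnd : (node t₁ t₂).leaves.Nodup} (hadj : (decompGraph t₁ t₂).Adj x y) (hxy : ¬x.1 <+: y.1) :
    (toBranchDecomp t₁ t₂ hall hnd).side x y = {v | x.1 <+: (leafPos hall v).1} := by
  ext v
  exact ⟨fun h => (prefix_iff_of_reachable_deleteEdges hadj hxy h).1 (List.prefix_refl _),
    fun h => (reachable_deleteEdges_of_prefix hxy h).symm⟩

theorem side_toBranchDecomp_of_prefix {hall : ∀ v, v ∈ (node t₁ t₂).leaves}
    {hnd : (node t₁ t₂).leaves.Nodup} (hadj : (decompGraph t₁ t₂).Adj x y) (hxy : ¬x.1 <+: y.1)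
    (hyx : y.1 <+: x.1) :
    (toBranchDecomp t₁ t₂ hall hnd).side y x = {v | x.1 <+: (leafPos hall v).1}ᶜ := by
  have hx : 2 ≤ x.1.length := by
    have := y.length_pos
    have := lt_of_le_of_ne hyx.length_le fun h => hxy (by rw [hyx.eq_of_length h])
    omega
  ext v
  change ((decompGraph t₁ t₂).deleteEdges {s(y, x)}).Reachable y _ ↔ _
  rw [Sym2.eq_swap]
  exact ⟨fun h hv => hxy ((prefix_iff_of_reachable_deleteEdges hadj hxy h).2 hv),
    fun hv => (reachable_deleteEdges_left_of_not_prefix hx hxy).trans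
      (reachable_deleteEdges_left_of_not_prefix hx hv).symm⟩

theorem bimimw_le_of_forall_subtree? (hall : ∀ v, v ∈ (node t₁ t₂).leaves)
    (hnd : (node t₁ t₂).leaves.Nodup) {E : V → V → Prop} {k : ℕ}
    (hk : ∀ p s, (node t₁ t₂).subtree? p = some s → bimimCut E {v | v ∈ s.leaves} ≤ k) :
    bimimw E ≤ k := by
  have hsub (x : Pos t₁ t₂) : bimimCut E {v | x.1 <+: (leafPos hall v).1} ≤ k := by
    obtain ⟨s, hs⟩ := Option.isSome_iff_exists.1 x.2.2
    convert hk x.1 s hs using 2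
    ext v
    exact (mem_leaves_iff_prefix hnd hs (subtree?_leafPos hall v)).symm
  have hcut (a b : Pos t₁ t₂) (hab : (decompGraph t₁ t₂).Adj a b) :
      bimimCut E ((toBranchDecomp t₁ t₂ hall hnd).side a b) ≤ k := by
    by_cases hpre : a.1 <+: b.1
    · rw [side_toBranchDecomp_of_prefix hab.symm (not_prefix_of_adj_of_prefix hab hpre) hpre,
        bimimCut_compl]
      exact hsub b
    · rw [side_toBranchDecomp hab hpre]
      exact hsub a
  calc bimimw E ≤ (toBranchDecomp t₁ t₂ hall hnd).width E := Nat.sInf_le ⟨_, rfl⟩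
    _ ≤ k := by
      refine csSup_le ⟨_, left, right, adj_left_right, rfl⟩ ?_
      rintro n ⟨a, b, hab, rfl⟩
      exact hcut a b hab

end Decomposition

end BinTree

section Build

open BinTree

variable {W V : Type} [Fintype V] {A : W → W → Prop} {r : W} {ℓ : V → W} {d : V}

variable (A ℓ) in
noncomputable def below (u : W) : Finset V := Finset.univ.filter fun v => ReflTransGen A u (ℓ v)

@[simp]
theorem mem_below {u : W} {v : V} : v ∈ below A ℓ u ↔ ReflTransGen A u (ℓ v) := by
  simp [below]

variable [Fintype W]

variable (A) in
noncomputable def descendants (u : W) : Finset W := Finset.univ.filter (ReflTransGen A u)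

theorem self_mem_descendants (u : W) : u ∈ descendants A u :=
  Finset.mem_filter.2 ⟨Finset.mem_univ u, .refl⟩

variable (A ℓ) in
noncomputable def liveChildren (u : W) : Finset W :=
  Finset.univ.filter fun c => A u c ∧ (below A ℓ c).Nonempty

variable (A ℓ d) in
/-- The fuel `n` has to be at least the number of descendants of `u`; `d` is a junk leaf, used
only when fuel or leaves run out. -/
noncomputable def buildTree : ℕ → W → BinTree V
  | 0, _ => leaf d
  | n + 1, u => comb d ((Finset.univ.filter (ℓ · = u)).toList.map leaf ++
      (liveChildren A ℓ u).toList.map (buildTree n))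

variable (A ℓ d) in
noncomputable def treeItems (n : ℕ) (u : W) : List (BinTree V) :=
  (Finset.univ.filter (ℓ · = u)).toList.map leaf ++
    (liveChildren A ℓ u).toList.map (buildTree A ℓ d n)

theorem buildTree_succ (n : ℕ) (u : W) :
    buildTree A ℓ d (n + 1) u = comb d (treeItems A ℓ d n u) := rfl

theorem mem_treeItems {n : ℕ} {u : W} {t : BinTree V} :
    t ∈ treeItems A ℓ d n u ↔
      (∃ w, ℓ w = u ∧ leaf w = t) ∨ ∃ c ∈ liveChildren A ℓ u, buildTree A ℓ d n c = t := by
  simp [treeItems]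

@[simp]
theorem mem_liveChildren {u c : W} :
    c ∈ liveChildren A ℓ u ↔ A u c ∧ (below A ℓ c).Nonempty := by
  simp [liveChildren]

theorem mem_below_iff {u : W} {v : V} :
    v ∈ below A ℓ u ↔ ℓ v = u ∨ ∃ c ∈ liveChildren A ℓ u, v ∈ below A ℓ c := by
  simp only [mem_below, mem_liveChildren]
  constructor
  · intro h
    rcases h.cases_head with h | ⟨c, huc, hcv⟩
    · exact .inl h.symm
    · exact .inr ⟨c, ⟨huc, v, mem_below.2 hcv⟩, hcv⟩
  · rintro (h | ⟨c, ⟨huc, -⟩, hcv⟩)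
    · exact h ▸ .refl
    · exact hcv.head huc

theorem IsArborescence.card_descendants_lt (hA : IsArborescence A r) {u c : W} (h : A u c) :
    (descendants A c).card < (descendants A u).card := by
  refine Finset.card_lt_card ⟨fun w hw => ?_, fun hsub => ?_⟩
  · simp only [descendants, Finset.mem_filter, Finset.mem_univ, true_and] at hw ⊢
    exact hw.head h
  · exact hA.not_reflTransGen_of_rel h
      (by simpa [descendants] using hsub (self_mem_descendants u))

theorem IsArborescence.card_descendants_le_of_mem_liveChildren (hA : IsArborescence A r)
    {n : ℕ} {u c : W} (hn : (descendants A u).card ≤ n + 1) (hc : c ∈ liveChildren A ℓ u) :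
    (descendants A c).card ≤ n := by
  have := hA.card_descendants_lt (mem_liveChildren.1 hc).1
  omega

theorem card_descendants_ne_zero (u : W) : (descendants A u).card ≠ 0 :=
  Finset.card_ne_zero_of_mem (self_mem_descendants u)

theorem treeItems_ne_nil {n : ℕ} {u : W} (hne : (below A ℓ u).Nonempty) :
    treeItems A ℓ d n u ≠ [] := by
  obtain ⟨v, hv⟩ := hne
  rcases mem_below_iff.1 hv with h | ⟨c, hc, -⟩
  · exact List.ne_nil_of_mem (mem_treeItems.2 (.inl ⟨v, h, rfl⟩))
  · exact List.ne_nil_of_mem (mem_treeItems.2 (.inr ⟨c, hc, rfl⟩))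

theorem IsArborescence.mem_leaves_buildTree (hA : IsArborescence A r) {n : ℕ} {u : W}
    (hn : (descendants A u).card ≤ n) (hne : (below A ℓ u).Nonempty) (v : V) :
    v ∈ (buildTree A ℓ d n u).leaves ↔ v ∈ below A ℓ u := by
  induction n generalizing u with
  | zero => exact absurd (Nat.le_zero.1 hn) (card_descendants_ne_zero u)
  | succ n ih =>
    have hchild {c : W} (hc : c ∈ liveChildren A ℓ u) :
        v ∈ (buildTree A ℓ d n c).leaves ↔ v ∈ below A ℓ c :=
      ih (hA.card_descendants_le_of_mem_liveChildren hn hc) (mem_liveChildren.1 hc).2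
    rw [buildTree_succ, leaves_comb d (treeItems_ne_nil hne), List.mem_flatMap, mem_below_iff]
    constructor
    · rintro ⟨t, ht, hvt⟩
      rcases mem_treeItems.1 ht with ⟨w, hw, rfl⟩ | ⟨c, hc, rfl⟩
      · exact .inl ((List.mem_singleton.1 hvt) ▸ hw)
      · exact .inr ⟨c, hc, (hchild hc).1 hvt⟩
    · rintro (hv | ⟨c, hc, hvc⟩)
      · exact ⟨leaf v, mem_treeItems.2 (.inl ⟨v, hv, rfl⟩), List.mem_singleton_self v⟩
      · exact ⟨_, mem_treeItems.2 (.inr ⟨c, hc, rfl⟩), (hchild hc).2 hvc⟩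

theorem IsArborescence.nodup_leaves_buildTree (hA : IsArborescence A r) {n : ℕ} {u : W}
    (hn : (descendants A u).card ≤ n) (hne : (below A ℓ u).Nonempty) :
    (buildTree A ℓ d n u).leaves.Nodup := by
  induction n generalizing u with
  | zero => exact absurd (Nat.le_zero.1 hn) (card_descendants_ne_zero u)
  | succ n ih =>
    have hlt {c : W} (hc : c ∈ liveChildren A ℓ u) : (descendants A c).card ≤ n :=
      hA.card_descendants_le_of_mem_liveChildren hn hc
    have hbelow {c : W} (hc : c ∈ liveChildren A ℓ u) {v : V}
        (hv : v ∈ (buildTree A ℓ d n c).leaves) : ReflTransGen A c (ℓ v) :=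
      mem_below.1 ((hA.mem_leaves_buildTree (hlt hc) (mem_liveChildren.1 hc).2 v).1 hv)
    rw [buildTree_succ, leaves_comb d (treeItems_ne_nil hne), List.nodup_flatMap]
    refine ⟨fun t ht => ?_, List.pairwise_append.2 ⟨?_, ?_, ?_⟩⟩
    · rcases mem_treeItems.1 ht with ⟨w, -, rfl⟩ | ⟨c, hc, rfl⟩
      · exact List.nodup_singleton w
      · exact ih (hlt hc) (mem_liveChildren.1 hc).2
    · rw [List.pairwise_map]
      exact (Finset.nodup_toList _).imp fun hne => by
        simpa [Function.onFun, leaves] using hne.symm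
    · rw [List.pairwise_map]
      refine (Finset.nodup_toList _).imp_of_mem fun hc hc' hcc' v hv hv' => hcc' ?_
      rw [Finset.mem_toList] at hc hc'
      exact hA.child_unique (mem_liveChildren.1 hc).1 (mem_liveChildren.1 hc').1 (hbelow hc hv)
        (hbelow hc' hv')
    · simp only [List.mem_map, Finset.mem_toList]
      rintro _ ⟨w, hw, rfl⟩ _ ⟨c, hc, rfl⟩ v hv hv'
      obtain rfl : v = w := List.mem_singleton.1 hv
      exact hA.not_reflTransGen_of_rel (mem_liveChildren.1 hc).1
        ((Finset.mem_filter.1 hw).2 ▸ hbelow hc hv')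

theorem isFanAt_comb {n : ℕ} {u : W} {l : List (BinTree V)} (hl : l ⊆ treeItems A ℓ d n u)
    (hne : l ≠ [])
    (hchild : ∀ c ∈ liveChildren A ℓ u, ∀ v,
      v ∈ (buildTree A ℓ d n c).leaves ↔ v ∈ below A ℓ c) :
    IsFanAt A ℓ u {v | v ∈ (comb d l).leaves} := by
  refine ⟨{v | ℓ v = u ∧ leaf v ∈ l}, {c | c ∈ liveChildren A ℓ u ∧ buildTree A ℓ d n c ∈ l},
    fun v hv => hv.1, fun c hc => (mem_liveChildren.1 hc.1).1, ?_⟩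
  ext v
  simp only [Set.mem_ofPred_eq, Set.mem_union, leaves_comb d hne, List.mem_flatMap]
  constructor
  · rintro ⟨t, ht, hvt⟩
    rcases mem_treeItems.1 (hl ht) with ⟨w, hw, rfl⟩ | ⟨c, hc, rfl⟩
    · obtain rfl := List.mem_singleton.1 hvt
      exact .inl ⟨hw, ht⟩
    · exact .inr ⟨c, ⟨hc, ht⟩, mem_below.1 ((hchild c hc v).1 hvt)⟩
  · rintro (⟨-, hv⟩ | ⟨c, ⟨hc, hct⟩, hcv⟩)
    · exact ⟨leaf v, hv, List.mem_singleton_self v⟩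
    · exact ⟨_, hct, (hchild c hc v).2 (mem_below.2 hcv)⟩

theorem IsArborescence.isFanAt_of_subtree?_buildTree (hA : IsArborescence A r) {n : ℕ} {u : W}
    (hn : (descendants A u).card ≤ n) (hne : (below A ℓ u).Nonempty) {p : List Bool}
    {s : BinTree V} (h : (buildTree A ℓ d n u).subtree? p = some s) :
    ∃ w, IsFanAt A ℓ w {v | v ∈ s.leaves} := by
  induction n generalizing u p with
  | zero => exact absurd (Nat.le_zero.1 hn) (card_descendants_ne_zero u)
  | succ n ih =>
    have hlt {c : W} (hc : c ∈ liveChildren A ℓ u) : (descendants A c).card ≤ n :=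
      hA.card_descendants_le_of_mem_liveChildren hn hc
    rw [buildTree_succ] at h
    rcases subtree?_comb d (treeItems_ne_nil hne) h with ⟨l, hl, hsub, rfl⟩ | ⟨t, ht, q, hq⟩
    · exact ⟨u, isFanAt_comb hsub hl fun c hc =>
        hA.mem_leaves_buildTree (hlt hc) (mem_liveChildren.1 hc).2⟩
    · rcases mem_treeItems.1 ht with ⟨w, -, rfl⟩ | ⟨c, hc, rfl⟩
      · rcases q with _ | ⟨_, _⟩
        · obtain rfl : leaf w = s := by simpa using hq
          exact ⟨ℓ w, by simpa [leaves] using isFanAt_singleton (A := A) w⟩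
        · simp at hq
      · exact ih (hlt hc) (mem_liveChildren.1 hc).2 hq

theorem IsArborescence.exists_binTree_forall_isFanAt (hA : IsArborescence A r) (ℓ : V → W)
    (hV : 2 ≤ Nat.card V) :
    ∃ t₁ t₂ : BinTree V, (∀ v, v ∈ (node t₁ t₂).leaves) ∧ (node t₁ t₂).leaves.Nodup ∧
      ∀ p s, (node t₁ t₂).subtree? p = some s → ∃ u, IsFanAt A ℓ u {v | v ∈ s.leaves} := by
  obtain ⟨d⟩ : Nonempty V := (Nat.card_pos_iff.1 (by omega)).1
  have hn : (descendants A r).card ≤ Fintype.card W := Finset.card_le_univ _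
  have hne : (below A ℓ r).Nonempty := ⟨d, mem_below.2 (hA.reachable _)⟩
  have hall (v : V) : v ∈ (buildTree A ℓ d (Fintype.card W) r).leaves :=
    (hA.mem_leaves_buildTree hn hne v).2 (mem_below.2 (hA.reachable _))
  rcases hbuild : buildTree A ℓ d (Fintype.card W) r with w | ⟨t₁, t₂⟩
  · obtain ⟨x, y, hxy⟩ := Finite.one_lt_card_iff_nontrivial.1 (by omega : 1 < Nat.card V)
    have hx := hall x
    have hy := hall y
    simp only [hbuild, leaves, List.mem_singleton] at hx hy
    exact absurd (hx.trans hy.symm) hxy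
  · refine ⟨t₁, t₂, hbuild ▸ hall, hbuild ▸ hA.nodup_leaves_buildTree hn hne, fun p s hs => ?_⟩
    exact hA.isFanAt_of_subtree?_buildTree hn hne (hbuild ▸ hs)

end Build

theorem IsArborescence.bimimw_le_two {W V : Type} [Fintype W] [Fintype V] {A : W → W → Prop}
    {r : W} (hA : IsArborescence A r) (hV : 2 ≤ Nat.card V) {ℓ : V → W} {E : V → V → Prop}
    {S T : V → List W} (hS : ∀ v, (S v).IsChain A ∧ (S v).getLast? = some (ℓ v))
    (hT : ∀ v, (T v).IsChain A ∧ (T v).getLast? = some (ℓ v))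
    (hE : ∀ v w, E v w ↔ ∃ x, x ∈ S v ∧ x ∈ T w) : bimimw E ≤ 2 := by
  obtain ⟨t₁, t₂, hall, hnd, hfan⟩ := hA.exists_binTree_forall_isFanAt ℓ hV
  refine BinTree.bimimw_le_of_forall_subtree? hall hnd fun p s hs => ?_
  obtain ⟨u, hu⟩ := hfan p s hs
  exact hA.bimimCut_le_two_of_isFanAt hS hT hE hu

theorem stmt_12_general {W V : Type} [Fintype W] [Fintype V]
    (A : W → W → Prop) (r : W)
    (hanti : ∀ u v, A u v → ¬A v u)
    (htree : (SimpleGraph.fromRel A).IsTree)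
    (hroot : ∀ w, Relation.ReflTransGen A r w)
    (h2 : 2 ≤ Nat.card V)
    (E : V → V → Prop) (S T : V → List W)
    (hSne : ∀ v, S v ≠ [])
    (hSch : ∀ v, (S v).Chain' A) (hTch : ∀ v, (T v).Chain' A)
    (hlast : ∀ v, (S v).getLast? = (T v).getLast?)
    (hrep : ∀ v w, E v w ↔ ∃ x, x ∈ S v ∧ x ∈ T w) :
    bimimw E ≤ 2 := by
  have hS (v : V) : (S v).IsChain A ∧ (S v).getLast? = some ((S v).getLast (hSne v)) :=
    ⟨hSch v, List.getLast?_eq_some_getLast (hSne v)⟩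
  have hT (v : V) : (T v).IsChain A ∧ (T v).getLast? = some ((S v).getLast (hSne v)) :=
    ⟨hTch v, (hlast v).symm.trans (hS v).2⟩
  exact (isArborescence_of_isTree hanti htree hroot).bimimw_le_two h2 hS hT hrep

theorem stmt_12 {W V : Type} [Fintype W] [Fintype V]
    (A : W → W → Prop) (r : W)
    (hloop : ∀ w, ¬A w w) (hanti : ∀ u v, A u v → ¬A v u)
    (htree : (SimpleGraph.fromRel A).IsTree)
    (hroot : ∀ w, Relation.ReflTransGen A r w)
    (h2 : 2 ≤ Nat.card V)
    (E : V → V → Prop) (S T : V → List W)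
    (hSne : ∀ v, S v ≠ []) (hTne : ∀ v, T v ≠ [])
    (hSnd : ∀ v, (S v).Nodup) (hTnd : ∀ v, (T v).Nodup)
    (hSch : ∀ v, (S v).Chain' A) (hTch : ∀ v, (T v).Chain' A)
    (hlast : ∀ v, (S v).getLast? = (T v).getLast?)
    (hrep : ∀ v w, E v w ↔ ∃ x, x ∈ S v ∧ x ∈ T w) :
    bimimw E ≤ 2 :=
  stmt_12_general A r hanti htree hroot h2 E S T hSne hSch hTch hlast hrep
end

section
/- For every positive integer k there exists a P2-convex digraph G with bimimw(G) ≥ k; that is, a digraph G whose vertex set is partitioned into (A, B) with every edge having one endpoint in A and the other in B, together with a linear order on A under which, for every b ∈ B, each of N⁺_G(b) and N⁻_G(b) is a set of consecutive elements of A, such that bimimw(G) ≥ k. -/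
open scoped Classical

/-!
Take `A = Fin r`, `B = Fin r × Fin r` and the edges `u → (u, v) → v` for `u ≠ v`. Each vertex of
`B` has one in- and one out-neighbour, so the convexity conditions hold for any order on `A`.

Every branch decomposition of a graph on `n ≥ 2` vertices has an edge whose cut `(X, Xᶜ)` has at
least `n / 3` vertices on each side. For `r = 6k` such a cut has `bimim ≥ k`. If `X` and `Xᶜ`
both contain `k` vertices of `A`, say `uᵢ ∈ X` and `vᵢ ∉ X`, then each pair `(uᵢ, vᵢ)` carries an
edge from `X` to `Xᶜ`, and these edges form an induced matching. Otherwise one side `W` has fewer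
than `k` vertices in `A`; since `|W| ≥ n / 3`, counting gives `k` vertices `u ∉ W` with some
`(u, v) ∈ W`, and the edges `u → (u, v)` form an induced matching of `G[Wᶜ → W]`.
-/

section InducedMatching

variable {V : Type} [Finite V] {D : V → V → Prop}

lemma IsIndMatching.card_le_nu {M : Finset (V × V)} (hM : IsIndMatching D M) :
    M.card ≤ nu D := by
  have := Fintype.ofFinite V
  refine le_csSup ⟨Fintype.card (V × V), ?_⟩ ⟨M, hM, rfl⟩
  rintro n ⟨M', -, rfl⟩
  exact M'.card_le_univ

lemma card_le_nu_of_pairwise {ι : Type} (s : Finset ι) (e : ι → V × V)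
    (he : ∀ i ∈ s, D (e i).1 (e i).2)
    (hsep : ∀ i ∈ s, ∀ j ∈ s, i ≠ j → ∀ x, (x = (e i).1 ∨ x = (e i).2) →
      ∀ y, (y = (e j).1 ∨ y = (e j).2) → x ≠ y ∧ ¬D x y) :
    s.card ≤ nu D := by
  have hinj : Set.InjOn e s := fun i hi j hj hij => by
    by_contra hne
    exact (hsep i hi j hj hne _ (Or.inl rfl) _ (Or.inl rfl)).1 (by rw [hij])
  rw [← Finset.card_image_of_injOn hinj]
  refine IsIndMatching.card_le_nu ⟨?_, ?_⟩
  · simp only [Finset.mem_image]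
    rintro _ ⟨i, hi, rfl⟩
    exact he i hi
  · simp only [Finset.mem_image]
    rintro _ ⟨i, hi, rfl⟩ _ ⟨j, hj, rfl⟩ hij
    exact hsep i hi j hj (fun h => hij (by rw [h]))

end InducedMatching

lemma exists_injective_fin_of_le_ncard {α : Type} [Finite α] {S : Set α} {k : ℕ}
    (h : k ≤ S.ncard) : ∃ f : Fin k → α, Function.Injective f ∧ ∀ i, f i ∈ S := by
  obtain ⟨T, hTS, hT⟩ := Set.exists_subset_card_eq h
  rw [← Nat.card_coe_set_eq] at hT
  let e := (Finite.equivFin T).symm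
  exact ⟨fun i => e (Fin.cast hT.symm i),
    fun i j hij => Fin.cast_injective _ (e.injective (Subtype.ext hij)), fun i => hTS (e _).2⟩

lemma Set.ncard_le_ncard_preimage_inl_add {α β : Type} [Finite α] [Finite β] (W : Set (α ⊕ β)) :
    W.ncard ≤ (Sum.inl ⁻¹' W).ncard + (Sum.inr ⁻¹' W).ncard := by
  have hW : W ⊆ Sum.inl '' (Sum.inl ⁻¹' W) ∪ Sum.inr '' (Sum.inr ⁻¹' W) := by
    rintro (u | p) h <;> simp [h]
  calc W.ncard ≤ _ := Set.ncard_le_ncard hW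
    _ ≤ _ := Set.ncard_union_le _ _
    _ ≤ _ := add_le_add (Set.ncard_image_le) (Set.ncard_image_le)

lemma Set.ncard_setOf_fst_mem {α β : Type} (S : Set α) :
    {p : α × β | p.1 ∈ S}.ncard = S.ncard * Nat.card β := by
  have : {p : α × β | p.1 ∈ S} = S ×ˢ Set.univ := by ext; simp
  rw [this, Set.ncard_prod, Set.ncard_univ]

lemma Set.InjOn.mem_of_between_of_unique {α : Type} {A : Set α} {f : α → ℕ} (hf : A.InjOn f)
    {P : α → Prop} (hP : ∀ x z, P x → P z → x = z) :
    ∀ x ∈ A, ∀ y ∈ A, ∀ z ∈ A, f x ≤ f y → f y ≤ f z → P x → P z → P y := by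
  intro x hx y hy z _ hxy hyz hPx hPz
  obtain rfl := hP x z hPx hPz
  rwa [hf hy hx (le_antisymm hyz hxy)]

namespace SimpleGraph

variable {L : Type} {T : SimpleGraph L} {a b u x : L}

def branch (T : SimpleGraph L) (a b : L) : Set L :=
  {x | (T.deleteEdges {s(a, b)}).Reachable a x}

lemma self_mem_branch : a ∈ T.branch a b := Reachable.refl a

lemma mem_branch_swap : x ∈ T.branch b a ↔ (T.deleteEdges {s(a, b)}).Reachable b x := by
  rw [branch, Sym2.eq_swap]
  rfl

lemma Reachable.mem_of_forall_adj {S : Set L} (hS : ∀ c d, T.Adj c d → c ∈ S → d ∈ S)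
    {c d : L} (h : T.Reachable c d) (hc : c ∈ S) : d ∈ S := by
  obtain ⟨p⟩ := h
  induction p with
  | nil => exact hc
  | cons h _ ih => exact ih (hS _ _ h hc)

lemma notMem_branch_of_adj (hT : T.IsAcyclic) (h : T.Adj a b) : b ∉ T.branch a b :=
  isBridge_iff.mp (isAcyclic_iff_forall_adj_isBridge.mp hT h)

lemma IsTree.compl_branch (hT : T.IsTree) (h : T.Adj a b) :
    (T.branch a b)ᶜ = T.branch b a := by
  ext x
  rw [Set.mem_compl_iff]
  constructor
  · intro hx
    refine (hT.connected.preconnected a x).mem_of_forall_adj (S := T.branch a b ∪ T.branch b a)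
      (fun c d hcd hc => ?_) (Or.inl self_mem_branch) |>.resolve_left hx
    by_cases he : s(c, d) = s(a, b)
    · rcases Sym2.eq_iff.mp he with ⟨-, rfl⟩ | ⟨-, rfl⟩
      · exact Or.inr self_mem_branch
      · exact Or.inl self_mem_branch
    · have hcd' : (T.deleteEdges {s(a, b)}).Adj c d := by simp [hcd, he]
      rcases hc with hc | hc
      · exact Or.inl (Reachable.trans hc hcd'.reachable)
      · exact Or.inr (mem_branch_swap.mpr ((mem_branch_swap.mp hc).trans hcd'.reachable))
  · exact fun hb ha => notMem_branch_of_adj hT.isAcyclic h (ha.trans (mem_branch_swap.mp hb).symm)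

lemma branch_subset_branch (hT : T.IsAcyclic) (hau : T.Adj a u) (hub : u ≠ b) :
    T.branch u a ⊆ T.branch a b := by
  rintro x ⟨w⟩
  have ha : a ∉ w.support := fun ha =>
    notMem_branch_of_adj hT hau.symm ⟨w.takeUntil a ha⟩
  have hau' : (T.deleteEdges {s(a, b)}).Adj a u := by simp [hau, hub, hau.ne']
  refine hau'.reachable.trans (reachable_deleteEdges_iff_exists_walk.mpr
    ⟨w.mapLe (deleteEdges_le _), fun he => ha ?_⟩)
  simpa using (w.mapLe (deleteEdges_le _)).fst_mem_support_of_mem_edges he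

lemma eq_or_mem_branch_of_mem_branch (hx : x ∈ T.branch a b) :
    x = a ∨ ∃ u, T.Adj a u ∧ u ≠ b ∧ x ∈ T.branch u a := by
  classical
  obtain ⟨w⟩ := hx
  obtain ⟨p, hp⟩ := w.toPath
  cases p with
  | nil => exact Or.inl rfl
  | @cons _ y _ h q =>
    obtain ⟨hay, hne⟩ := deleteEdges_adj.mp h
    refine Or.inr ⟨y, hay, by rintro rfl; exact hne rfl, reachable_deleteEdges_iff_exists_walk.mpr
      ⟨q.mapLe (deleteEdges_le _), fun he => ((Walk.cons_isPath_iff _ _).mp hp).2 ?_⟩⟩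
    simpa using (q.mapLe (deleteEdges_le _)).snd_mem_support_of_mem_edges he

lemma isTree_of_sum_ncard_neighborSet {L : Type} [Fintype L] {G : SimpleGraph L}
    (hc : G.Connected) (h : ∑ v, (G.neighborSet v).ncard + 2 = 2 * Fintype.card L) :
    G.IsTree := by
  classical
  refine isTree_iff_connected_and_card.mpr ⟨hc, ?_⟩
  simp_rw [← Nat.card_coe_set_eq, Nat.card_eq_fintype_card, card_neighborSet_eq_degree,
    sum_degrees_eq_twice_card_edges, edgeFinset_card] at h
  rw [Nat.card_eq_fintype_card, Nat.card_eq_fintype_card]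
  omega

end SimpleGraph

namespace BranchDecomp

variable {V : Type} (bd : BranchDecomp V) {a b : bd.L}

lemma exists_adj [Nonempty V] : ∃ a b, bd.T.Adj a b := by
  let v : V := Classical.arbitrary V
  obtain ⟨b, hb⟩ := Set.nonempty_of_ncard_ne_zero (s := bd.T.neighborSet (bd.toLeaf v))
    (by rw [bd.mem_leaf v]; norm_num)
  exact ⟨_, b, hb⟩

lemma compl_side (h : bd.T.Adj a b) : (bd.side a b)ᶜ = bd.side b a := by
  change (bd.toLeaf ⁻¹' bd.T.branch a b)ᶜ = bd.toLeaf ⁻¹' bd.T.branch b a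
  rw [← Set.preimage_compl, bd.isTree.compl_branch h]

lemma ncard_side_add_ncard_side [Finite V] (h : bd.T.Adj a b) :
    (bd.side a b).ncard + (bd.side b a).ncard = Nat.card V := by
  rw [← bd.compl_side h, Set.ncard_add_ncard_compl]

lemma ncard_side_le_one (h : bd.T.Adj a b) (ha : (bd.T.neighborSet a).ncard = 1) :
    (bd.side a b).ncard ≤ 1 := by
  obtain ⟨c, hc⟩ := Set.ncard_eq_one.mp ha
  have hb : b = c := by simpa [hc] using (show b ∈ bd.T.neighborSet a from h)
  have key : ∀ v ∈ bd.side a b, bd.toLeaf v = a := fun v hv => by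
    refine (SimpleGraph.eq_or_mem_branch_of_mem_branch hv).resolve_right ?_
    rintro ⟨u, hu, hub, -⟩
    exact hub (by simpa [hc, hb] using (show u ∈ bd.T.neighborSet a from hu))
  have hs : (bd.side a b).Subsingleton := fun v hv w hw => bd.inj (by rw [key v hv, key w hw])
  exact (Set.ncard_le_one_iff hs.finite).mpr fun hv hw => hs hv hw

lemma exists_le_two_mul_ncard_side [Finite V] (h : bd.T.Adj a b)
    (ha : (bd.T.neighborSet a).ncard = 3) :
    ∃ u, bd.T.Adj a u ∧ u ≠ b ∧ (bd.side a b).ncard ≤ 2 * (bd.side u a).ncard := by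
  have hb : b ∈ bd.T.neighborSet a := h
  obtain ⟨u₁, u₂, -, hu⟩ : ∃ u₁ u₂, u₁ ≠ u₂ ∧ bd.T.neighborSet a \ {b} = {u₁, u₂} := by
    apply Set.ncard_eq_two.mp
    rw [Set.ncard_sdiff_singleton_of_mem hb, ha]
  have hmem : ∀ u, u = u₁ ∨ u = u₂ → bd.T.Adj a u ∧ u ≠ b := fun u hu' => by
    have : u ∈ bd.T.neighborSet a \ {b} := by rw [hu]; rcases hu' with rfl | rfl <;> simp
    exact this
  have hsub : bd.side a b ⊆ bd.side u₁ a ∪ bd.side u₂ a := by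
    intro v hv
    rcases SimpleGraph.eq_or_mem_branch_of_mem_branch hv with hva | ⟨u, hau, hub, hvu⟩
    · have := bd.mem_leaf v
      rw [hva, ha] at this
      exact absurd this (by norm_num)
    · have : u ∈ bd.T.neighborSet a \ {b} := ⟨hau, hub⟩
      rw [hu] at this
      rcases this with rfl | rfl
      · exact Or.inl hvu
      · exact Or.inr hvu
  have hle := (Set.ncard_le_ncard hsub).trans (Set.ncard_union_le _ _)
  rcases le_total (bd.side u₁ a).ncard (bd.side u₂ a).ncard with h12 | h12
  · exact ⟨u₂, (hmem u₂ (Or.inr rfl)).1, (hmem u₂ (Or.inr rfl)).2, by omega⟩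
  · exact ⟨u₁, (hmem u₁ (Or.inl rfl)).1, (hmem u₁ (Or.inl rfl)).2, by omega⟩

/-- Among the edges `(a, b)` with `side a b` of more than `2n/3` leaves, one with the smallest
branch at `a` has a child `u` at `a` whose side has between `n/3` and `2n/3` leaves. -/
theorem exists_balanced_side [Finite V] (hV : 2 ≤ Nat.card V) :
    ∃ a b, bd.T.Adj a b ∧ Nat.card V ≤ 3 * (bd.side a b).ncard ∧
      Nat.card V ≤ 3 * (bd.side a b)ᶜ.ncard := by
  have := bd.finL
  set n := Nat.card V
  suffices ∃ a b, bd.T.Adj a b ∧ 3 * (bd.side a b).ncard ≤ 2 * n ∧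
      3 * (bd.side b a).ncard ≤ 2 * n by
    obtain ⟨a, b, hab, h1, h2⟩ := this
    have := bd.ncard_side_add_ncard_side hab
    exact ⟨a, b, hab, by omega, by rw [bd.compl_side hab]; omega⟩
  let S : Set (bd.L × bd.L) := {p | bd.T.Adj p.1 p.2 ∧ 2 * n < 3 * (bd.side p.1 p.2).ncard}
  rcases S.eq_empty_or_nonempty with hS | hS
  · have : Nonempty V := Finite.card_pos_iff.mp (by omega)
    obtain ⟨a, b, hab⟩ := bd.exists_adj
    have h1 : (a, b) ∉ S := hS ▸ Set.notMem_empty _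
    have h2 : (b, a) ∉ S := hS ▸ Set.notMem_empty _
    simp only [S, Set.mem_ofPred_eq, not_and, not_lt] at h1 h2
    exact ⟨a, b, hab, h1 hab, h2 hab.symm⟩
  obtain ⟨⟨a, b⟩, ⟨hab, hbig⟩, hmin⟩ :=
    S.exists_min_image (fun p => (bd.T.branch p.1 p.2).ncard) S.toFinite hS
  dsimp only at hab hbig
  rcases bd.subcubic a with ha | ha
  · have := bd.ncard_side_le_one hab ha
    omega
  obtain ⟨u, hau, hub, hheavy⟩ := bd.exists_le_two_mul_ncard_side hab ha
  have hsmall : (bd.T.branch u a).ncard < (bd.T.branch a b).ncard :=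
    Set.ncard_lt_ncard ((Set.ssubset_iff_of_subset
      (SimpleGraph.branch_subset_branch bd.isTree.isAcyclic hau hub)).mpr
      ⟨a, SimpleGraph.self_mem_branch, SimpleGraph.notMem_branch_of_adj bd.isTree.isAcyclic hau.symm⟩)
  have hua : 3 * (bd.side u a).ncard ≤ 2 * n := by
    by_contra! h
    exact (hmin (u, a) ⟨hau.symm, h⟩).not_gt hsmall
  have := bd.ncard_side_add_ncard_side hau
  exact ⟨u, a, hau.symm, hua, by omega⟩

lemma bimimCut_le_width (E : V → V → Prop) (h : bd.T.Adj a b) :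
    bimimCut E (bd.side a b) ≤ bd.width E := by
  have := bd.finL
  refine le_csSup ((Set.finite_range fun p : bd.L × bd.L => bimimCut E (bd.side p.1 p.2)).subset
    ?_).bddAbove ⟨a, b, h, rfl⟩
  rintro _ ⟨c, d, -, rfl⟩
  exact ⟨(c, d), rfl⟩

end BranchDecomp

lemma le_bimimw {V : Type} [Nonempty (BranchDecomp V)] {E : V → V → Prop} {k : ℕ}
    (h : ∀ bd : BranchDecomp V, ∃ t₁ t₂, bd.T.Adj t₁ t₂ ∧ k ≤ bimimCut E (bd.side t₁ t₂)) :
    k ≤ bimimw E := by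
  refine le_csInf ?_ ?_
  · obtain ⟨bd⟩ := ‹Nonempty (BranchDecomp V)›
    exact ⟨_, bd, rfl⟩
  · rintro _ ⟨bd, rfl⟩
    obtain ⟨t₁, t₂, ht, hk⟩ := h bd
    exact hk.trans (bd.bimimCut_le_width E ht)

-- The spine is `inr 0 — ⋯ — inr s`; leaf `inl a` hangs from spine vertex `a - 1` clamped to
-- `[0, s]` (truncated subtraction gives `0 - 1 = 0`), so each end of the spine has two leaves.
def Caterpillar.spineOf {s : ℕ} (a : Fin (s + 3)) : Fin (s + 1) := ⟨min ((a : ℕ) - 1) s, by omega⟩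

open Caterpillar in
def caterpillar (s : ℕ) : SimpleGraph (Fin (s + 3) ⊕ Fin (s + 1)) where
  Adj
    | .inl a, .inr j | .inr j, .inl a => j = spineOf a
    | .inr i, .inr j => (SimpleGraph.pathGraph (s + 1)).Adj i j
    | .inl _, .inl _ => False
  symm := by
    constructor
    rintro (a | i) (b | j) h
    exacts [h, h, h, h.symm]
  loopless := by
    constructor
    rintro (a | i) h
    exacts [h, (SimpleGraph.pathGraph (s + 1)).loopless.irrefl i h]

namespace Caterpillar

variable {s : ℕ}

@[simp] lemma adj_inl_inl (a b : Fin (s + 3)) : ¬(caterpillar s).Adj (.inl a) (.inl b) := id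

@[simp] lemma adj_inl_inr (a : Fin (s + 3)) (j : Fin (s + 1)) :
    (caterpillar s).Adj (.inl a) (.inr j) ↔ j = spineOf a := Iff.rfl

@[simp] lemma adj_inr_inl (a : Fin (s + 3)) (j : Fin (s + 1)) :
    (caterpillar s).Adj (.inr j) (.inl a) ↔ j = spineOf a := Iff.rfl

@[simp] lemma adj_inr_inr (i j : Fin (s + 1)) :
    (caterpillar s).Adj (.inr i) (.inr j) ↔ (i : ℕ) + 1 = j ∨ (j : ℕ) + 1 = i :=
  SimpleGraph.pathGraph_adj

lemma ncard_neighborSet_inl (a : Fin (s + 3)) :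
    ((caterpillar s).neighborSet (.inl a)).ncard = 1 := by
  refine Set.ncard_eq_one.mpr ⟨.inr (spineOf a), ?_⟩
  ext (b | j) <;> simp

lemma ncard_neighborSet_inr (j : Fin (s + 1)) :
    ((caterpillar s).neighborSet (.inr j)).ncard = 3 := by
  refine Set.ncard_eq_three.mpr ⟨.inl ⟨j + 1, by omega⟩,
    if (j : ℕ) = 0 then .inl ⟨0, by omega⟩ else .inr ⟨j - 1, by omega⟩,
    if h : (j : ℕ) = s then .inl ⟨s + 2, by omega⟩ else .inr ⟨j + 1, by omega⟩, ?_, ?_, ?_, ?_⟩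
  any_goals split_ifs <;> simp only [ne_eq, Sum.inl.injEq, Sum.inr.injEq, reduceCtorEq,
    Fin.mk.injEq, not_false_eq_true] <;> omega
  ext (b | i)
  · simp only [SimpleGraph.mem_neighborSet, adj_inr_inl, Set.mem_insert_iff,
      Set.mem_singleton_iff, Fin.ext_iff, spineOf]
    split_ifs <;> simp only [Sum.inl.injEq, Fin.ext_iff, false_or, or_false] <;> omega
  · simp only [SimpleGraph.mem_neighborSet, adj_inr_inr, Set.mem_insert_iff,
      Set.mem_singleton_iff]
    split_ifs <;> simp only [Sum.inr.injEq, Fin.ext_iff, false_or, or_false, iff_false] <;> omega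

def spineHom (s : ℕ) : SimpleGraph.pathGraph (s + 1) →g caterpillar s where
  toFun := Sum.inr
  map_rel' h := h

lemma connected (s : ℕ) : (caterpillar s).Connected := by
  have hspine : ∀ j, (caterpillar s).Reachable (.inr 0) (.inr j) := fun j =>
    ((SimpleGraph.pathGraph_connected s).preconnected 0 j).map (spineHom s)
  refine SimpleGraph.connected_iff_exists_forall_reachable _ |>.mpr ⟨.inr 0, ?_⟩
  rintro (a | j)
  · exact (hspine _).trans ((adj_inr_inl a (spineOf a)).mpr rfl).reachable
  · exact hspine j

lemma isTree (s : ℕ) : (caterpillar s).IsTree := by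
  refine SimpleGraph.isTree_of_sum_ncard_neighborSet (connected s) ?_
  simp only [Fintype.sum_sum_type, ncard_neighborSet_inl, ncard_neighborSet_inr,
    Finset.sum_const, Finset.card_univ, Fintype.card_sum, Fintype.card_fin, smul_eq_mul]
  ring

end Caterpillar

lemma BranchDecomp.nonempty_of_three_le_card {V : Type} [Fintype V]
    (h : 3 ≤ Fintype.card V) : Nonempty (BranchDecomp V) := by
  obtain ⟨s, hs⟩ := Nat.exists_eq_add_of_le' h
  let e := Fintype.equivFinOfCardEq hs
  exact ⟨{
    L := Fin (s + 3) ⊕ Fin (s + 1)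
    finL := inferInstance
    T := caterpillar s
    isTree := Caterpillar.isTree s
    two_le := by rw [Nat.card_sum, Nat.card_fin, Nat.card_fin]; omega
    subcubic := by
      rintro (a | j)
      · exact Or.inl (Caterpillar.ncard_neighborSet_inl a)
      · exact Or.inr (Caterpillar.ncard_neighborSet_inr j)
    toLeaf := Sum.inl ∘ e
    inj := Sum.inl_injective.comp e.injective
    mem_leaf := fun v => Caterpillar.ncard_neighborSet_inl (e v)
    surj := by
      rintro (a | j) h
      · exact ⟨e.symm a, by simp⟩
      · rw [Caterpillar.ncard_neighborSet_inr] at h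
        omega }⟩

abbrev PairVertex (r : ℕ) : Type := Fin r ⊕ (Fin r × Fin r)

def pairEdge {r : ℕ} : PairVertex r → PairVertex r → Prop
  | .inl u, .inr p => p.1 = u ∧ p.1 ≠ p.2
  | .inr p, .inl v => p.2 = v ∧ p.1 ≠ p.2
  | _, _ => False

namespace PairVertex

variable {r k : ℕ}

lemma card : Fintype.card (PairVertex r) = r + r * r := by
  simp

lemma pairEdge_crosses {x y : PairVertex r} (h : pairEdge x y) :
    (x ∈ Set.range Sum.inl ∧ y ∈ (Set.range Sum.inl)ᶜ) ∨
      (x ∈ (Set.range Sum.inl)ᶜ ∧ y ∈ Set.range Sum.inl) := by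
  rcases x with u | p <;> rcases y with v | q <;> simp_all [pairEdge]

def position : PairVertex r → ℕ := Sum.elim (fun u => u) fun _ => 0

lemma injOn_position : (Set.range Sum.inl).InjOn (position (r := r)) := by
  rintro _ ⟨u, rfl⟩ _ ⟨v, rfl⟩ h
  simpa [position, Fin.ext_iff] using h

def support : PairVertex r → Set (Fin r)
  | .inl u => {u}
  | .inr p => {p.1, p.2}

lemma support_nonempty (x : PairVertex r) : x.support.Nonempty := by
  cases x <;> simp [support]

lemma not_disjoint_support_of_pairEdge {x y : PairVertex r} (h : pairEdge x y) :
    ¬Disjoint x.support y.support := by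
  rcases x with u | p <;> rcases y with v | q <;> simp_all [pairEdge, support]

lemma eq_of_pairEdge_inr {p : Fin r × Fin r} {x y : PairVertex r}
    (hx : pairEdge (.inr p) x) (hy : pairEdge (.inr p) y) : x = y := by
  rcases x with u | q <;> rcases y with v | q' <;> simp_all [pairEdge]

lemma eq_of_pairEdge_to_inr {p : Fin r × Fin r} {x y : PairVertex r}
    (hx : pairEdge x (.inr p)) (hy : pairEdge y (.inr p)) : x = y := by
  rcases x with u | q <;> rcases y with v | q' <;> simp_all [pairEdge]

lemma le_nu_cutRel_of_le_ncard_inl {X : Set (PairVertex r)}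
    (hX : k ≤ (Sum.inl ⁻¹' X).ncard) (hXc : k ≤ (Sum.inl ⁻¹' Xᶜ).ncard) :
    k ≤ nu (cutRel pairEdge X Xᶜ) := by
  obtain ⟨u, hu_inj, hu : ∀ i, Sum.inl (u i) ∈ X⟩ := exists_injective_fin_of_le_ncard hX
  obtain ⟨v, hv_inj, hv : ∀ i, Sum.inl (v i) ∉ X⟩ := exists_injective_fin_of_le_ncard hXc
  have huv : ∀ i j, u i ≠ v j := fun i j h => hv j (h ▸ hu i)
  let e : Fin k → PairVertex r × PairVertex r := fun i =>
    if Sum.inr (u i, v i) ∈ X then (.inr (u i, v i), .inl (v i)) else (.inl (u i), .inr (u i, v i))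
  have he : ∀ i, cutRel pairEdge X Xᶜ (e i).1 (e i).2 := fun i => by
    by_cases h : Sum.inr (u i, v i) ∈ X <;>
      simp [e, h, cutRel, pairEdge, hu i, hv i, huv i i]
  have hsupport : ∀ i x, (x = (e i).1 ∨ x = (e i).2) → x.support ⊆ {u i, v i} := by
    intro i x hx
    by_cases h : Sum.inr (u i, v i) ∈ X <;>
      rcases hx with rfl | rfl <;> simp [e, h, support, Set.subset_def]
  have hdisj : ∀ i j, i ≠ j → Disjoint ({u i, v i} : Set (Fin r)) {u j, v j} := by
    intro i j hij
    simp [hu_inj.ne hij.symm, hv_inj.ne hij.symm, huv, (huv _ _).symm]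
  simpa using card_le_nu_of_pairwise Finset.univ e (fun i _ => he i)
    fun i _ j _ hij x hx y hy => by
      have hxy := (hdisj i j hij).mono (hsupport i x hx) (hsupport j y hy)
      exact ⟨by rintro rfl; exact (support_nonempty x).ne_empty (disjoint_self.mp hxy),
        fun hD => not_disjoint_support_of_pairEdge hD.2.2 hxy⟩

variable (W : Set (PairVertex r))

def crossing : Set (Fin r) :=
  {u | Sum.inl u ∉ W ∧ ∃ v, u ≠ v ∧ Sum.inr (u, v) ∈ W}

lemma ncard_crossing_le_nu : (crossing W).ncard ≤ nu (cutRel pairEdge Wᶜ W) := by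
  have hU : ∀ u : crossing W, ∃ v, (u : Fin r) ≠ v ∧ Sum.inr ((u : Fin r), v) ∈ W :=
    fun u => u.2.2
  choose v hv using hU
  let e : crossing W → PairVertex r × PairVertex r := fun u => (.inl u, .inr (u, v u))
  have h := card_le_nu_of_pairwise (D := cutRel pairEdge Wᶜ W) Finset.univ e
    (fun u _ => ⟨u.2.1, (hv u).2, rfl, (hv u).1⟩) fun i _ j _ hij x hx y hy => by
      have hij' : (i : Fin r) ≠ j := fun h => hij (Subtype.ext h)
      rcases hx with rfl | rfl <;> rcases hy with rfl | rfl <;>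
        simp [e, cutRel, pairEdge, hij', (hv i).2, (hv j).2, Ne.symm hij']
  rwa [Finset.card_univ, ← Nat.card_eq_fintype_card, Nat.card_coe_set_eq] at h

lemma ncard_le_mul_ncard_crossing :
    W.ncard ≤ (Sum.inl ⁻¹' W).ncard + r * ((Sum.inl ⁻¹' W).ncard + (crossing W).ncard + 1) := by
  have hP : Sum.inr ⁻¹' W ⊆
      {p : Fin r × Fin r | p.1 ∈ Sum.inl ⁻¹' W ∪ crossing W} ∪ Set.range fun a => (a, a) := by
    rintro ⟨u, v⟩ h
    by_cases huv : u = v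
    · exact Or.inr ⟨u, by rw [huv]⟩
    · by_cases hu : Sum.inl u ∈ W
      · exact Or.inl (Or.inl hu)
      · exact Or.inl (Or.inr ⟨hu, v, huv, h⟩)
  have hdiag : (Set.range fun a : Fin r => (a, a)).ncard ≤ r := by
    rw [← Set.image_univ]
    exact (Set.ncard_image_le (Set.toFinite _)).trans (by simp)
  have := (Set.ncard_le_ncard hP).trans (Set.ncard_union_le _ _)
  rw [Set.ncard_setOf_fst_mem, Nat.card_fin] at this
  have := Set.ncard_union_le (Sum.inl ⁻¹' W) (crossing W)
  have := Set.ncard_le_ncard_preimage_inl_add W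
  nlinarith

lemma le_nu_cutRel_compl_of_ncard_inl_lt (hr : 6 * k ≤ r) {W : Set (PairVertex r)}
    (hW : r + r * r ≤ 3 * W.ncard) (hWA : (Sum.inl ⁻¹' W).ncard < k) :
    k ≤ nu (cutRel pairEdge Wᶜ W) := by
  by_contra! h
  have := (ncard_crossing_le_nu W).trans_lt h
  have := ncard_le_mul_ncard_crossing W
  nlinarith

lemma le_bimimCut_of_balanced (hr : 6 * k ≤ r) {X : Set (PairVertex r)}
    (hX : r + r * r ≤ 3 * X.ncard) (hXc : r + r * r ≤ 3 * Xᶜ.ncard) :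
    k ≤ bimimCut pairEdge X := by
  rw [bimimCut]
  by_cases hA : (Sum.inl ⁻¹' X).ncard < k
  · have := le_nu_cutRel_compl_of_ncard_inl_lt hr hX hA
    omega
  by_cases hAc : (Sum.inl ⁻¹' Xᶜ).ncard < k
  · have := le_nu_cutRel_compl_of_ncard_inl_lt hr hXc hAc
    rw [compl_compl] at this
    omega
  have := le_nu_cutRel_of_le_ncard_inl (not_lt.mp hA) (not_lt.mp hAc)
  omega

end PairVertex

theorem stmt_14 (k : ℕ) (hk : 1 ≤ k) :
    ∃ (V : Type) (_ : Fintype V) (E : V → V → Prop) (A : Set V) (f : V → ℕ),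
      (∀ u v, E u v → (u ∈ A ∧ v ∈ Aᶜ) ∨ (u ∈ Aᶜ ∧ v ∈ A)) ∧
        Set.InjOn f A ∧
        (∀ b ∈ Aᶜ, ∀ x ∈ A, ∀ y ∈ A, ∀ z ∈ A,
          f x ≤ f y → f y ≤ f z → E b x → E b z → E b y) ∧
        (∀ b ∈ Aᶜ, ∀ x ∈ A, ∀ y ∈ A, ∀ z ∈ A,
          f x ≤ f y → f y ≤ f z → E x b → E z b → E y b) ∧
        k ≤ bimimw E := by
  have hcard : Fintype.card (PairVertex (6 * k)) = 6 * k + 6 * k * (6 * k) := PairVertex.card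
  have : Nonempty (BranchDecomp (PairVertex (6 * k))) :=
    BranchDecomp.nonempty_of_three_le_card (by omega)
  refine ⟨PairVertex (6 * k), inferInstance, pairEdge, Set.range Sum.inl, PairVertex.position,
    fun _ _ => PairVertex.pairEdge_crosses, PairVertex.injOn_position, ?_, ?_,
    le_bimimw fun bd => ?_⟩
  · rintro (u | p) hb
    · exact absurd ⟨u, rfl⟩ hb
    · exact PairVertex.injOn_position.mem_of_between_of_unique fun _ _ =>
        PairVertex.eq_of_pairEdge_inr
  · rintro (u | p) hb
    · exact absurd ⟨u, rfl⟩ hb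
    · exact PairVertex.injOn_position.mem_of_between_of_unique fun _ _ =>
        PairVertex.eq_of_pairEdge_to_inr
  · obtain ⟨t₁, t₂, ht, h₁, h₂⟩ := bd.exists_balanced_side (by rw [Nat.card_eq_fintype_card]; omega)
    rw [Nat.card_eq_fintype_card, hcard] at h₁ h₂
    exact ⟨t₁, t₂, ht, PairVertex.le_bimimCut_of_balanced le_rfl h₁ h₂⟩
end

section
/- Let σ⁺, σ⁻, ρ⁺, ρ⁻ ⊆ ℕ and let d ∈ ℕ be such that for each μ ∈ {σ⁺, σ⁻, ρ⁺, ρ⁻} and all x, y ∈ ℕ with min(d, x) = min(d, y), x ∈ μ ⇔ y ∈ μ (this holds for d = d(Σ, Ρ) when all four sets are finite or co-finite). Let G be a digraph, A ⊆ V(G), X ⊆ A, and Y, Y' ⊆ V(G) ∖ A with Y ≡±_{d, V(G)∖A} Y'. Then (X, Y) (Σ, Ρ)-dominates A if and only if (X, Y') (Σ, Ρ)-dominates A, where Σ = (σ⁺, σ⁻) and Ρ = (ρ⁺, ρ⁻). -/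
open scoped Classical

/-- `|N⁺(v) ∩ S|`. -/
noncomputable def outDeg {V : Type} (E : V → V → Prop) (v : V) (S : Set V) : ℕ :=
  Nat.card {w : V | E v w ∧ w ∈ S}

/-- `|N⁻(v) ∩ S|`. -/
noncomputable def inDeg {V : Type} (E : V → V → Prop) (v : V) (S : Set V) : ℕ :=
  Nat.card {w : V | E w v ∧ w ∈ S}

/-- `S` `(μ⁺, μ⁻)`-dominates `A`. -/
def MDominates {V : Type} (E : V → V → Prop) (μp μm : Set ℕ) (S A : Set V) : Prop :=
  ∀ v ∈ A, outDeg E v S ∈ μp ∧ inDeg E v S ∈ μm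

/-- The pair `(X, Y)` `(Σ, Ρ)`-dominates `A`:
`X ∪ Y` `Σ`-dominates `X` and `X ∪ Y` `Ρ`-dominates `A ∖ X`. -/
def PairDominates {V : Type} (E : V → V → Prop) (σp σm ρp ρm : Set ℕ)
    (A X Y : Set V) : Prop :=
  MDominates E σp σm (X ∪ Y) X ∧ MDominates E ρp ρm (X ∪ Y) (A \ X)

/-- `X ≡⁺_{d,B} Y`. -/
def EquivPlus {V : Type} (E : V → V → Prop) (d : ℕ) (B X Y : Set V) : Prop :=
  ∀ u ∉ B, min d (inDeg E u X) = min d (inDeg E u Y)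

/-- `X ≡⁻_{d,B} Y`. -/
def EquivMinus {V : Type} (E : V → V → Prop) (d : ℕ) (B X Y : Set V) : Prop :=
  ∀ u ∉ B, min d (outDeg E u X) = min d (outDeg E u Y)

/-- `X ≡±_{d,B} Y`. -/
def EquivBoth {V : Type} (E : V → V → Prop) (d : ℕ) (B X Y : Set V) : Prop :=
  EquivPlus E d B X Y ∧ EquivMinus E d B X Y

lemma outDeg_union {V : Type} [Fintype V] (E : V → V → Prop) (v : V) (S T : Set V)
    (h : Disjoint S T) : outDeg E v (S ∪ T) = outDeg E v S + outDeg E v T := by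
  unfold outDeg
  have : {w : V | E v w ∧ w ∈ S ∪ T} = {w : V | E v w ∧ w ∈ S} ∪ {w : V | E v w ∧ w ∈ T} := by
    ext w; simp [Set.mem_union]; tauto
  rw [this, Nat.card_eq_card_toFinset, Nat.card_eq_card_toFinset, Nat.card_eq_card_toFinset,
    ← Set.ncard_eq_toFinset_card', ← Set.ncard_eq_toFinset_card', ← Set.ncard_eq_toFinset_card']
  exact Set.ncard_union_eq (h.mono (fun w hw => hw.2) (fun w hw => hw.2))
    (Set.toFinite _) (Set.toFinite _)

lemma inDeg_union {V : Type} [Fintype V] (E : V → V → Prop) (v : V) (S T : Set V)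
    (h : Disjoint S T) : inDeg E v (S ∪ T) = inDeg E v S + inDeg E v T := by
  unfold inDeg
  have : {w : V | E w v ∧ w ∈ S ∪ T} = {w : V | E w v ∧ w ∈ S} ∪ {w : V | E w v ∧ w ∈ T} := by
    ext w; simp [Set.mem_union]; tauto
  rw [this, Nat.card_eq_card_toFinset, Nat.card_eq_card_toFinset, Nat.card_eq_card_toFinset,
    ← Set.ncard_eq_toFinset_card', ← Set.ncard_eq_toFinset_card', ← Set.ncard_eq_toFinset_card']
  exact Set.ncard_union_eq (h.mono (fun w hw => hw.2) (fun w hw => hw.2))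
    (Set.toFinite _) (Set.toFinite _)

lemma min_add_congr (d a b b' : ℕ) (h : min d b = min d b') :
    min d (a + b) = min d (a + b') := by
  rcases le_or_gt d b with hb | hb <;> rcases le_or_gt d b' with hb' | hb' <;> omega

theorem stmt_15 {V : Type} [Fintype V] (σp σm ρp ρm : Set ℕ) (d : ℕ)
    (hd : ∀ μ ∈ ({σp, σm, ρp, ρm} : Set (Set ℕ)), ∀ x y : ℕ,
      min d x = min d y → (x ∈ μ ↔ y ∈ μ))
    (E : V → V → Prop) (A : Set V) (X : Set V) (hX : X ⊆ A)
    (Y Y' : Set V) (hY : Y ⊆ Aᶜ) (hY' : Y' ⊆ Aᶜ)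
    (hequiv : EquivBoth E d Aᶜ Y Y') :
    PairDominates E σp σm ρp ρm A X Y ↔ PairDominates E σp σm ρp ρm A X Y' := by
  have hdisj : Disjoint X Y := Set.disjoint_of_subset hX hY disjoint_compl_right
  have hdisj' : Disjoint X Y' := Set.disjoint_of_subset hX hY' disjoint_compl_right
  have hout : ∀ v ∈ A, min d (outDeg E v (X ∪ Y)) = min d (outDeg E v (X ∪ Y')) := by
    intro v hv
    rw [outDeg_union E v X Y hdisj, outDeg_union E v X Y' hdisj']
    exact min_add_congr d _ _ _ (hequiv.2 v (by simpa using hv))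
  have hin : ∀ v ∈ A, min d (inDeg E v (X ∪ Y)) = min d (inDeg E v (X ∪ Y')) := by
    intro v hv
    rw [inDeg_union E v X Y hdisj, inDeg_union E v X Y' hdisj']
    exact min_add_congr d _ _ _ (hequiv.1 v (by simpa using hv))
  have key : ∀ (μp μm : Set ℕ), μp ∈ ({σp, σm, ρp, ρm} : Set (Set ℕ)) →
      μm ∈ ({σp, σm, ρp, ρm} : Set (Set ℕ)) → ∀ B ⊆ A,
      (MDominates E μp μm (X ∪ Y) B ↔ MDominates E μp μm (X ∪ Y') B) := by
    intro μp μm hμp hμm B hB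
    constructor <;> intro h v hv <;>
      obtain ⟨h1, h2⟩ := h v hv
    · exact ⟨(hd μp hμp _ _ (hout v (hB hv))).mp h1,
        (hd μm hμm _ _ (hin v (hB hv))).mp h2⟩
    · exact ⟨(hd μp hμp _ _ (hout v (hB hv))).mpr h1,
        (hd μm hμm _ _ (hin v (hB hv))).mpr h2⟩
  unfold PairDominates
  rw [key σp σm (by simp) (by simp) X hX,
    key ρp ρm (by simp) (by simp) (A \ X) Set.diff_subset]
end

section
/- Let d ∈ ℕ, let G be a digraph on n vertices, and let A ⊆ V(G). Then the number of equivalence classes of ≡±_{d,A} on subsets of A satisfies nec(≡±_{d,A}) ≤ n^{d · bimim_G(A)}. -/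
open scoped Classical

/-!
In every class choose a representative `R ⊆ A` of minimum size. Then each `v ∈ R` is critical:
deleting it changes a capped degree of some `u ∉ A`, so `v` has an edge to (or from) a vertex
`u ∉ A` with at most `d` neighbours in `R`. Choosing such edges greedily, always at a vertex
with the fewest candidate partners, yields an induced matching across the cut that accounts for
the critical vertices at most `d` at a time, so `|R| ≤ d · bimim_G(A)`. Hence the classes are
indexed by subsets of `A` of size at most `k = d · bimim_G(A)`; there are at most
`(|A| + 1)^k ≤ n^k` of them, as `k = 0` when `A = V`.
-/

open Finset

namespace IsIndMatching

variable {V : Type} {D : V → V → Prop} {M : Finset (V × V)}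

theorem card_le [Fintype V] (hM : IsIndMatching D M) : #M ≤ Fintype.card V := by
  have hinj : Set.InjOn Prod.fst (M : Set (V × V)) := fun e he f hf hef => by
    by_contra hne
    exact (hM.2 e he f hf hne e.1 (Or.inl rfl) f.1 (Or.inl rfl)).1 hef
  rw [← card_image_of_injOn hinj]
  exact card_le_univ _

theorem bddAbove_card [Fintype V] (D : V → V → Prop) :
    BddAbove {n | ∃ M, IsIndMatching D M ∧ #M = n} :=
  ⟨Fintype.card V, by rintro n ⟨M, hM, rfl⟩; exact hM.card_le⟩

theorem card_le_nu_s18 [Fintype V] (hM : IsIndMatching D M) : #M ≤ nu D :=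
  le_csSup (bddAbove_card D) ⟨M, hM, rfl⟩

theorem image_swap (hM : IsIndMatching D M) : IsIndMatching (flip D) (M.image Prod.swap) := by
  refine ⟨?_, ?_⟩
  · simp only [mem_image]
    rintro _ ⟨e, he, rfl⟩
    exact hM.1 e he
  · simp only [mem_image]
    rintro _ ⟨e, he, rfl⟩ _ ⟨f, hf, rfl⟩ hne x hx y hy
    have := hM.2 f hf e he (fun h => hne (by rw [h])) y (by simpa [or_comm] using hy) x
      (by simpa [or_comm] using hx)
    exact ⟨this.1.symm, this.2⟩

/-- In a bipartite digraph the other incidences and edges between `(x, y)` and `f` are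
impossible. -/
theorem insert {S : Set V} (hD : ∀ x y, D x y → x ∈ S ∧ y ∉ S) (hM : IsIndMatching D M)
    {x y : V} (hxy : D x y)
    (hfresh : ∀ f ∈ M, f.1 ≠ x ∧ f.2 ≠ y ∧ ¬D x f.2 ∧ ¬D f.1 y) :
    IsIndMatching D (insert (x, y) M) := by
  refine ⟨?_, ?_⟩
  · simp only [mem_insert, forall_eq_or_imp]
    exact ⟨hxy, hM.1⟩
  · have hx := hD x y hxy
    simp only [mem_insert]
    rintro e (rfl | he) f (rfl | hf) hne a ha b hb
    · exact absurd rfl hne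
    · have := hfresh f hf
      have hfS := hD _ _ (hM.1 f hf)
      rcases ha with rfl | rfl <;> rcases hb with rfl | rfl <;> grind
    · have := hfresh e he
      have heS := hD _ _ (hM.1 e he)
      rcases ha with rfl | rfl <;> rcases hb with rfl | rfl <;> grind
    · exact hM.2 e he f hf hne a ha b hb

end IsIndMatching

section Nu

variable {V : Type} [Fintype V]

theorem exists_isIndMatching_card_eq_nu (D : V → V → Prop) :
    ∃ M, IsIndMatching D M ∧ #M = nu D :=
  Nat.sSup_mem (s := {n | ∃ M, IsIndMatching D M ∧ #M = n}) ⟨0, ∅, by simp [IsIndMatching]⟩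
    (IsIndMatching.bddAbove_card D)

theorem nu_flip (D : V → V → Prop) : nu (flip D) = nu D := by
  have key : ∀ D' : V → V → Prop, nu D' ≤ nu (flip D') := fun D' => by
    obtain ⟨M, hM, hcard⟩ := exists_isIndMatching_card_eq_nu D'
    rw [← hcard, ← card_image_of_injective M Prod.swap_injective]
    exact hM.image_swap.card_le_nu_s18
  exact le_antisymm (key (flip D)) (key D)

theorem nu_eq_zero_of_forall_not (D : V → V → Prop) (h : ∀ x y, ¬D x y) : nu D = 0 := by
  obtain ⟨M, hM, hcard⟩ := exists_isIndMatching_card_eq_nu D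
  rw [← hcard, card_eq_zero, eq_empty_iff_forall_notMem]
  exact fun e he => h _ _ (hM.1 e he)

end Nu

theorem cutRel_flip {V : Type} (E : V → V → Prop) (A B : Set V) :
    cutRel (flip E) A B = flip (cutRel E B A) := by
  ext x y
  simp only [cutRel, flip, and_left_comm]

theorem bimimCut_eq_nu_add_nu_flip {V : Type} [Fintype V] (E : V → V → Prop) (A : Set V) :
    bimimCut E A = nu (cutRel E A Aᶜ) + nu (cutRel (flip E) A Aᶜ) := by
  rw [bimimCut, cutRel_flip, nu_flip]

theorem bimimCut_univ {V : Type} [Fintype V] (E : V → V → Prop) : bimimCut E Set.univ = 0 := by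
  simp only [bimimCut, Set.compl_univ]
  rw [nu_eq_zero_of_forall_not _ fun _ _ h => h.2.1, nu_eq_zero_of_forall_not _ fun _ _ h => h.1]

/-- Greedy extraction: take `v ∈ R` with fewest neighbours in `P` and an edge `vu` into `P`,
then discard the in-neighbours of `u` from `R` (at most `d` of them) and the out-neighbours
of `v` from `P`. By the choice of `v`, every remaining vertex of `R` keeps a neighbour in
what is left of `P`. -/
theorem exists_isIndMatching_card_le {V : Type} {D : V → V → Prop} {S : Set V}
    (hD : ∀ x y, D x y → x ∈ S ∧ y ∉ S) (d : ℕ) (R P : Finset V)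
    (hP : ∀ u ∈ P, #{w ∈ R | D w u} ≤ d) (hR : ∀ v ∈ R, ∃ u ∈ P, D v u) :
    ∃ M, IsIndMatching D M ∧ M ⊆ R ×ˢ P ∧ #R ≤ d * #M := by
  induction R using Finset.strongInduction generalizing P with
  | _ R ih =>
  obtain rfl | hRne := R.eq_empty_or_nonempty
  · exact ⟨∅, by simp [IsIndMatching], empty_subset _, by simp⟩
  obtain ⟨v, hvR, hvmin⟩ := exists_min_image R (fun v => #{u ∈ P | D v u}) hRne
  obtain ⟨u, huP, hvu⟩ := hR v hvR
  set R' := {w ∈ R | ¬D w u}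
  set P' := {w ∈ P | ¬D v w}
  have hvR' : v ∉ R' := by simp [R', hvu]
  have hR'P' : ∀ w ∈ R', ∃ u' ∈ P', D w u' := by
    intro w hw
    by_contra! hcon
    have hsub : {u' ∈ P | D w u'} ⊆ {u' ∈ P | D v u'} := fun u' hu' => by
      simp only [mem_filter, P'] at hu' hcon ⊢
      exact ⟨hu'.1, by_contra fun h => hcon u' ⟨hu'.1, h⟩ hu'.2⟩
    have heq := eq_of_subset_of_card_le hsub (hvmin w (mem_filter.1 hw).1)
    have : u ∈ {u' ∈ P | D w u'} := heq ▸ mem_filter.2 ⟨huP, hvu⟩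
    exact (mem_filter.1 hw).2 (mem_filter.1 this).2
  obtain ⟨M, hM, hMsub, hcard⟩ :=
    ih R' (filter_ssubset.2 ⟨v, hvR, not_not.2 hvu⟩) P'
      (fun w hw => (card_le_card (filter_subset_filter _ (filter_subset _ _))).trans
        (hP w (mem_filter.1 hw).1)) hR'P'
  have hfresh : ∀ f ∈ M, f.1 ≠ v ∧ f.2 ≠ u ∧ ¬D v f.2 ∧ ¬D f.1 u := fun f hf => by
    obtain ⟨hf1, hf2⟩ := mem_product.1 (hMsub hf)
    simp only [R', P', mem_filter] at hf1 hf2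
    exact ⟨fun h => hvR' (h ▸ mem_filter.2 hf1), fun h => hf2.2 (h ▸ hvu), hf2.2, hf1.2⟩
  refine ⟨insert (v, u) M, hM.insert hD hvu hfresh, ?_, ?_⟩
  · refine insert_subset (mem_product.2 ⟨hvR, huP⟩) (hMsub.trans ?_)
    exact product_subset_product (filter_subset _ _) (filter_subset _ _)
  · have hnotMem : (v, u) ∉ M := fun h => (hfresh _ h).1 rfl
    have hsplit : #{w ∈ R | D w u} + #R' = #R := card_filter_add_card_filter_not _
    rw [card_insert_of_notMem hnotMem, Nat.mul_succ]
    have := hP u huP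
    omega

section Equivalence

variable {V : Type} {E : V → V → Prop} {d : ℕ} {A X Y Z : Set V}

theorem EquivBoth.refl (X : Set V) : EquivBoth E d A X X :=
  ⟨fun _ _ => rfl, fun _ _ => rfl⟩

theorem EquivBoth.symm (h : EquivBoth E d A X Y) : EquivBoth E d A Y X :=
  ⟨fun u hu => (h.1 u hu).symm, fun u hu => (h.2 u hu).symm⟩

theorem EquivBoth.trans (h : EquivBoth E d A X Y) (h' : EquivBoth E d A Y Z) :
    EquivBoth E d A X Z :=
  ⟨fun u hu => (h.1 u hu).trans (h'.1 u hu), fun u hu => (h.2 u hu).trans (h'.2 u hu)⟩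

end Equivalence

section Representative

variable {V : Type} (E : V → V → Prop) (d : ℕ) (A : Set V)

theorem inDeg_coe (u : V) (R : Finset V) : inDeg E u ↑R = #{w ∈ R | E w u} := by
  rw [inDeg, ← Set.ncard_coe_finset, coe_filter, ← Nat.card_coe_set_eq]
  simp only [and_comm, mem_coe]

theorem exists_inDeg_le_of_not_equivPlus_erase {R : Finset V} {v : V}
    (h : ¬EquivPlus E d A ↑R ↑(R.erase v)) : ∃ u ∉ A, E v u ∧ inDeg E u ↑R ≤ d := by
  simp only [EquivPlus, not_forall] at h
  obtain ⟨u, hu, hne⟩ := h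
  rw [inDeg_coe, inDeg_coe, filter_erase] at hne
  by_cases hv : v ∈ {w ∈ R | E w u}
  · rw [card_erase_of_mem hv] at hne
    refine ⟨u, hu, (mem_filter.1 hv).2, ?_⟩
    rw [inDeg_coe]
    omega
  · exact absurd (by rw [erase_eq_of_notMem hv]) hne

theorem card_filter_exists_inDeg_le [Fintype V] {R : Finset V} (hRA : ↑R ⊆ A) :
    #{v ∈ R | ∃ u ∉ A, E v u ∧ inDeg E u ↑R ≤ d} ≤ d * nu (cutRel E A Aᶜ) := by
  obtain ⟨M, hM, -, hcard⟩ := exists_isIndMatching_card_le (D := cutRel E A Aᶜ) (S := A)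
    (fun _ _ h => ⟨h.1, h.2.1⟩) d {v ∈ R | ∃ u ∉ A, E v u ∧ inDeg E u ↑R ≤ d}
    {u | u ∉ A ∧ inDeg E u ↑R ≤ d}
    (fun u hu => by
      refine (card_le_card fun w hw => ?_).trans ((inDeg_coe E u R).symm.trans_le
        (mem_filter.1 hu).2.2)
      obtain ⟨hwR, -, -, hwu⟩ := mem_filter.1 hw
      exact mem_filter.2 ⟨(mem_filter.1 hwR).1, hwu⟩)
    (fun v hv => by
      obtain ⟨hvR, u, hu, hvu, hdeg⟩ := mem_filter.1 hv
      exact ⟨u, by simp [hu, hdeg], hRA hvR, hu, hvu⟩)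
  exact hcard.trans (Nat.mul_le_mul_left d hM.card_le_nu_s18)

/-- Out-degrees of `E` are in-degrees of `flip E`, so both halves of `bimimCut` come from
`card_filter_exists_inDeg_le`. -/
theorem card_le_of_forall_not_equivBoth_erase [Fintype V] {R : Finset V} (hRA : ↑R ⊆ A)
    (hmin : ∀ v ∈ R, ¬EquivBoth E d A ↑R ↑(R.erase v)) : #R ≤ d * bimimCut E A := by
  have hcover : R ⊆ {v ∈ R | ∃ u ∉ A, E v u ∧ inDeg E u ↑R ≤ d} ∪
      {v ∈ R | ∃ u ∉ A, flip E v u ∧ inDeg (flip E) u ↑R ≤ d} := fun v hv => by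
    rcases not_and_or.1 (hmin v hv) with h | h
    · exact mem_union_left _ (mem_filter.2 ⟨hv, exists_inDeg_le_of_not_equivPlus_erase E d A h⟩)
    · exact mem_union_right _
        (mem_filter.2 ⟨hv, exists_inDeg_le_of_not_equivPlus_erase (flip E) d A h⟩)
  calc #R ≤ _ := (card_le_card hcover).trans (card_union_le _ _)
    _ ≤ d * nu (cutRel E A Aᶜ) + d * nu (cutRel (flip E) A Aᶜ) :=
      add_le_add (card_filter_exists_inDeg_le E d A hRA)
        (card_filter_exists_inDeg_le (flip E) d A hRA)
    _ = d * bimimCut E A := by rw [bimimCut_eq_nu_add_nu_flip, mul_add]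

theorem exists_equivBoth_forall_not_equivBoth_erase [Fintype V] {X : Set V} (hX : X ⊆ A) :
    ∃ R : Finset V, ↑R ⊆ A ∧ EquivBoth E d A X ↑R ∧
      ∀ v ∈ R, ¬EquivBoth E d A ↑R ↑(R.erase v) := by
  obtain ⟨R, hR, hmin⟩ := exists_min_image
    ({R ∈ A.toFinset.powerset | EquivBoth E d A X ↑R} : Finset (Finset V)) card
    ⟨X.toFinset, by simpa [hX] using EquivBoth.refl X⟩
  simp only [mem_filter, mem_powerset, Set.subset_toFinset] at hR hmin
  refine ⟨R, hR.1, hR.2, fun v hv h => ?_⟩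
  exact (card_erase_lt_of_mem hv).not_ge
    (hmin _ ⟨(coe_subset.2 (erase_subset v R)).trans hR.1, hR.2.trans h⟩)

theorem exists_equivBoth_card_le [Fintype V] {X : Set V} (hX : X ⊆ A) :
    ∃ R : Finset V, ↑R ⊆ A ∧ EquivBoth E d A X ↑R ∧ #R ≤ d * bimimCut E A := by
  obtain ⟨R, hRA, hXR, hmin⟩ := exists_equivBoth_forall_not_equivBoth_erase E d A hX
  exact ⟨R, hRA, hXR, card_le_of_forall_not_equivBoth_erase E d A hRA hmin⟩

end Representative

/-- Every set of size at most `k + 1` is a set of size at most `k`, possibly with one more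
element inserted. -/
theorem card_filter_powerset_card_le {α : Type} [DecidableEq α] (s : Finset α) (k : ℕ) :
    #{t ∈ s.powerset | #t ≤ k} ≤ (#s + 1) ^ k := by
  induction k with
  | zero =>
    refine (card_le_card fun t ht => ?_).trans (card_singleton (∅ : Finset α)).le
    simpa using (mem_filter.1 ht).2
  | succ k ih =>
    have hcover : {t ∈ s.powerset | #t ≤ k + 1} ⊆
        (s.insertNone ×ˢ {t ∈ s.powerset | #t ≤ k}).image
          fun p => p.1.elim p.2 (insert · p.2) := by
      intro t ht
      simp only [mem_filter, mem_powerset] at ht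
      simp only [mem_image, mem_product, mem_filter, mem_powerset, Prod.exists]
      by_cases htk : #t ≤ k
      · exact ⟨none, t, ⟨by simp, ht.1, htk⟩, rfl⟩
      · obtain ⟨a, ha⟩ : t.Nonempty := card_pos.1 (by omega)
        refine ⟨some a, t.erase a, ⟨by simpa using ht.1 ha, (erase_subset a t).trans ht.1, ?_⟩, ?_⟩
        · rw [card_erase_of_mem ha]; omega
        · exact insert_erase ha
    calc #{t ∈ s.powerset | #t ≤ k + 1}
        ≤ #s.insertNone * #{t ∈ s.powerset | #t ≤ k} :=
          (card_le_card hcover).trans (card_image_le.trans (card_product _ _).le)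
      _ ≤ (#s + 1) ^ (k + 1) := by
        rw [card_insertNone, pow_succ']
        exact Nat.mul_le_mul_left _ ih

theorem card_equivBoth_classes_le {V : Type} [Fintype V] {E : V → V → Prop} {d : ℕ}
    {A : Set V} (k : ℕ)
    (hk : ∀ X ⊆ A, ∃ R : Finset V, ↑R ⊆ A ∧ EquivBoth E d A X ↑R ∧ #R ≤ k) :
    Nat.card {Q : Set (Set V) | ∃ X, X ⊆ A ∧ Q = {Y | Y ⊆ A ∧ EquivBoth E d A X Y}} ≤
      #{t ∈ A.toFinset.powerset | #t ≤ k} := by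
  set F : Finset (Finset V) := {t ∈ A.toFinset.powerset | #t ≤ k}
  have hsub : {Q : Set (Set V) | ∃ X, X ⊆ A ∧ Q = {Y | Y ⊆ A ∧ EquivBoth E d A X Y}} ⊆
      (fun t : Finset V => {Y | Y ⊆ A ∧ EquivBoth E d A ↑t Y}) '' ↑F := by
    rintro _ ⟨X, hXA, rfl⟩
    obtain ⟨R, hRA, hXR, hRk⟩ := hk X hXA
    refine ⟨R, by simp [F, Set.subset_toFinset, hRA, hRk], ?_⟩
    ext Y
    exact and_congr_right fun _ => ⟨hXR.trans, hXR.symm.trans⟩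
  rw [Nat.card_coe_set_eq, ← Set.ncard_coe_finset F]
  exact (Set.ncard_le_ncard hsub (Set.toFinite _)).trans Set.ncard_image_le

theorem stmt_18 {V : Type} [Fintype V] (d : ℕ) (E : V → V → Prop) (A : Set V) :
    Nat.card {Q : Set (Set V) | ∃ X, X ⊆ A ∧ Q = {Y | Y ⊆ A ∧ EquivBoth E d A X Y}} ≤
      Nat.card V ^ (d * bimimCut E A) := by
  calc _ ≤ #{t ∈ A.toFinset.powerset | #t ≤ d * bimimCut E A} :=
        card_equivBoth_classes_le _ fun X hX => exists_equivBoth_card_le E d A hX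
    _ ≤ (#A.toFinset + 1) ^ (d * bimimCut E A) := card_filter_powerset_card_le _ _
    _ ≤ Nat.card V ^ (d * bimimCut E A) := by
      by_cases hA : A = Set.univ
      · simp [hA, bimimCut_univ]
      obtain ⟨c, hc⟩ := (Set.ne_univ_iff_exists_notMem A).1 hA
      refine Nat.pow_le_pow_left ?_ _
      rw [Nat.card_eq_fintype_card]
      exact card_lt_univ_of_notMem (by simpa using hc)
end
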